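/- arXiv:2509.12376 — 4 statements merged into one kernel-verified Lean document; each statement's English description precedes it below -/
import Mathlib

section
/- The union of two matroids on (possibly overlapping) ground sets is again a matroid, whose independent sets are exactly the unions I₁ ∪ I₂ of independent sets I₁ of the first and I₂ of the second matroid. -/
/-- A matroid given by its family of independent finite sets: downward closed,
nonempty (contains `∅`), and satisfying the augmentation axiom. -/
structure FinMatroid (α : Type*) [DecidableEq α] where
  Indep : Finset α → Prop
  indep_empty : Indep ∅
  indep_subset : ∀ ⦃I J : Finset α⦄, Indep J → I ⊆ J → Indep I
  indep_aug : ∀ ⦃I J : Finset α⦄, Indep I → Indep J → I.card < J.card →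
    ∃ s ∈ J \ I, Indep (insert s I)

private lemma matroid_union_aug_aux {α : Type*} [DecidableEq α] (M₁ M₂ : FinMatroid α)
    (J₁ J₂ : Finset α) (hJ₁ : M₁.Indep J₁) (hJ₂ : M₂.Indep J₂) (hdJ : Disjoint J₁ J₂) :
    ∀ n I₁ I₂, M₁.Indep I₁ → M₂.Indep I₂ → Disjoint I₁ I₂ →
      (I₁ ∪ I₂).card < (J₁ ∪ J₂).card →
      J₁.card + J₂.card - ((I₁ ∩ J₁).card + (I₂ ∩ J₂).card) = n →
      ∃ s ∈ (J₁ ∪ J₂) \ (I₁ ∪ I₂), ∃ A B : Finset α, M₁.Indep A ∧ M₂.Indep B ∧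
        insert s (I₁ ∪ I₂) = A ∪ B := by
  intro n
  induction n using Nat.strong_induction_on with
  | _ n ih =>
    intro I₁ I₂ hI₁ hI₂ hd hcard hn
    have hJc : (J₁ ∪ J₂).card = J₁.card + J₂.card := Finset.card_union_of_disjoint hdJ
    have hIc : (I₁ ∪ I₂).card = I₁.card + I₂.card := Finset.card_union_of_disjoint hd
    have hlt : I₁.card < J₁.card ∨ I₂.card < J₂.card := by omega
    rcases hlt with h1 | h2
    · obtain ⟨x, hx, hxI⟩ := M₁.indep_aug hI₁ hJ₁ h1
      rw [Finset.mem_sdiff] at hx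
      obtain ⟨hxJ₁, hxI₁⟩ := hx
      by_cases hx2 : x ∈ I₂
      · -- exchange x from I₂ to I₁
        have hxJ₂ : x ∉ J₂ := Finset.disjoint_left.mp hdJ hxJ₁
        have hunion : insert x I₁ ∪ I₂.erase x = I₁ ∪ I₂ := by
          ext y
          by_cases hy : y = x
          · subst hy; simp [hx2]
          · simp [Finset.mem_union, Finset.mem_insert, Finset.mem_erase, hy]
        have hd' : Disjoint (insert x I₁) (I₂.erase x) := by
          rw [Finset.disjoint_left]
          intro a ha
          rcases Finset.mem_insert.mp ha with rfl | h
          · exact Finset.notMem_erase a I₂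
          · exact fun h' => Finset.disjoint_left.mp hd h (Finset.mem_of_mem_erase h')
        have e1 : insert x I₁ ∩ J₁ = insert x (I₁ ∩ J₁) :=
          Finset.insert_inter_of_mem hxJ₁
        have c1 : (insert x I₁ ∩ J₁).card = (I₁ ∩ J₁).card + 1 := by
          rw [e1, Finset.card_insert_of_notMem (fun h => hxI₁ (Finset.mem_inter.mp h).1)]
        have e2 : I₂.erase x ∩ J₂ = I₂ ∩ J₂ := by
          ext y
          simp only [Finset.mem_inter, Finset.mem_erase]
          constructor
          · tauto
          · rintro ⟨h, h'⟩
            exact ⟨⟨fun hyx => hxJ₂ (hyx ▸ h'), h⟩, h'⟩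
        have b1 : (insert x I₁ ∩ J₁).card ≤ J₁.card :=
          Finset.card_le_card Finset.inter_subset_right
        have b2 : (I₂.erase x ∩ J₂).card ≤ J₂.card :=
          Finset.card_le_card Finset.inter_subset_right
        have hlt' : J₁.card + J₂.card -
            ((insert x I₁ ∩ J₁).card + (I₂.erase x ∩ J₂).card) < n := by
          rw [c1, e2] at *
          omega
        obtain ⟨s, hs, A, B, hA, hB, hins⟩ :=
          ih _ hlt' (insert x I₁) (I₂.erase x) hxI
            (M₂.indep_subset hI₂ (Finset.erase_subset _ _)) hd'
            (by rw [hunion]; exact hcard) rfl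
        rw [hunion] at hs hins
        exact ⟨s, hs, A, B, hA, hB, hins⟩
      · refine ⟨x, Finset.mem_sdiff.mpr ⟨Finset.mem_union_left _ hxJ₁, ?_⟩,
          insert x I₁, I₂, hxI, hI₂, ?_⟩
        · simp [hxI₁, hx2]
        · rw [Finset.insert_union]
    · obtain ⟨x, hx, hxI⟩ := M₂.indep_aug hI₂ hJ₂ h2
      rw [Finset.mem_sdiff] at hx
      obtain ⟨hxJ₂, hxI₂⟩ := hx
      by_cases hx1 : x ∈ I₁
      · have hxJ₁ : x ∉ J₁ := Finset.disjoint_right.mp hdJ hxJ₂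
        have hunion : I₁.erase x ∪ insert x I₂ = I₁ ∪ I₂ := by
          ext y
          by_cases hy : y = x
          · subst hy; simp [hx1]
          · simp [Finset.mem_union, Finset.mem_insert, Finset.mem_erase, hy]
        have hd' : Disjoint (I₁.erase x) (insert x I₂) := by
          rw [Finset.disjoint_right]
          intro a ha
          rcases Finset.mem_insert.mp ha with rfl | h
          · exact Finset.notMem_erase a I₁
          · exact fun h' => Finset.disjoint_right.mp hd h (Finset.mem_of_mem_erase h')
        have e1 : insert x I₂ ∩ J₂ = insert x (I₂ ∩ J₂) :=
          Finset.insert_inter_of_mem hxJ₂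
        have c1 : (insert x I₂ ∩ J₂).card = (I₂ ∩ J₂).card + 1 := by
          rw [e1, Finset.card_insert_of_notMem (fun h => hxI₂ (Finset.mem_inter.mp h).1)]
        have e2 : I₁.erase x ∩ J₁ = I₁ ∩ J₁ := by
          ext y
          simp only [Finset.mem_inter, Finset.mem_erase]
          constructor
          · tauto
          · rintro ⟨h, h'⟩
            exact ⟨⟨fun hyx => hxJ₁ (hyx ▸ h'), h⟩, h'⟩
        have b1 : (insert x I₂ ∩ J₂).card ≤ J₂.card :=
          Finset.card_le_card Finset.inter_subset_right
        have b2 : (I₁.erase x ∩ J₁).card ≤ J₁.card :=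
          Finset.card_le_card Finset.inter_subset_right
        have hlt' : J₁.card + J₂.card -
            ((I₁.erase x ∩ J₁).card + (insert x I₂ ∩ J₂).card) < n := by
          rw [c1, e2] at *
          omega
        obtain ⟨s, hs, A, B, hA, hB, hins⟩ :=
          ih _ hlt' (I₁.erase x) (insert x I₂)
            (M₁.indep_subset hI₁ (Finset.erase_subset _ _)) hxI hd'
            (by rw [hunion]; exact hcard) rfl
        rw [hunion] at hs hins
        exact ⟨s, hs, A, B, hA, hB, hins⟩
      · refine ⟨x, Finset.mem_sdiff.mpr ⟨Finset.mem_union_right _ hxJ₂, ?_⟩,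
          I₁, insert x I₂, hI₁, hxI, ?_⟩
        · simp [hxI₂, hx1]
        · rw [Finset.union_insert]

/-- The union of two matroids (on possibly overlapping ground sets) is again a
matroid, whose independent sets are exactly the unions `A ∪ B` of an independent
set `A` of the first and an independent set `B` of the second. -/
theorem matroid_union_two {α : Type*} [DecidableEq α] (M₁ M₂ : FinMatroid α) :
    ∃ M : FinMatroid α, ∀ I : Finset α,
      M.Indep I ↔ ∃ A B : Finset α, M₁.Indep A ∧ M₂.Indep B ∧ I = A ∪ B := by
  refine ⟨⟨fun I => ∃ A B : Finset α, M₁.Indep A ∧ M₂.Indep B ∧ I = A ∪ B,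
    ⟨∅, ∅, M₁.indep_empty, M₂.indep_empty, by simp⟩, ?_, ?_⟩, fun I => Iff.rfl⟩
  · rintro I J ⟨A, B, hA, hB, rfl⟩ hIJ
    refine ⟨I ∩ A, I ∩ B, M₁.indep_subset hA Finset.inter_subset_right,
      M₂.indep_subset hB Finset.inter_subset_right, ?_⟩
    ext y
    simp only [Finset.mem_inter, Finset.mem_union]
    constructor
    · intro hy
      have := hIJ hy
      rw [Finset.mem_union] at this
      tauto
    · tauto
  · rintro I J ⟨A, B, hA, hB, rfl⟩ ⟨C, D, hC, hD, rfl⟩ hcard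
    have hC' : M₁.Indep C := hC
    have hD' : M₂.Indep (D \ C) := M₂.indep_subset hD (Finset.sdiff_subset)
    have hB' : M₂.Indep (B \ A) := M₂.indep_subset hB (Finset.sdiff_subset)
    have hUC : C ∪ D \ C = C ∪ D := Finset.union_sdiff_self_eq_union
    have hUA : A ∪ B \ A = A ∪ B := Finset.union_sdiff_self_eq_union
    obtain ⟨s, hs, A', B', hA', hB'', hins⟩ :=
      matroid_union_aug_aux M₁ M₂ C (D \ C) hC' hD' Finset.disjoint_sdiff _
        A (B \ A) hA hB' Finset.disjoint_sdiff
        (by rw [hUA, hUC]; exact hcard) rfl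
    rw [hUA, hUC] at hs
    rw [hUA] at hins
    exact ⟨s, hs, A', B', hA', hB'', hins⟩
end

section
/- The rank of the matroid union M₁ ∨ ⋯ ∨ Mₙ of matroids on a common ground set S, evaluated at X ⊆ S, equals min over Y ⊆ X of (∑ᵢ rᵢ(Y) + |X \ Y|), where rᵢ is the rank function of Mᵢ. -/
open Finset

/-- Independence in the union `M₁ ∨ ⋯ ∨ Mₙ` of matroids. -/
def unionIndep {α : Type*} [DecidableEq α] {n : ℕ} (M : Fin n → FinMatroid α)
    (I : Finset α) : Prop :=
  ∃ f : Fin n → Finset α, (∀ i, (M i).Indep (f i)) ∧ I = Finset.univ.biUnion f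

/-- The rank of a subset `X` w.r.t. an independence family: the maximal size of
an independent subset of `X`. -/
noncomputable def rankOf {α : Type*} (Indep : Finset α → Prop) (X : Finset α) : ℕ :=
  sSup {k : ℕ | ∃ I : Finset α, I ⊆ X ∧ Indep I ∧ I.card = k}

/-! Splitting an independent `I = ⋃ Iᵢ` into `I ∩ Y` and `I \ Y` gives
`|I| ≤ ∑ᵢ rᵢ(Y) + |X \ Y|`. For the converse, induct on `X` for all families at once and
remove some `x ∈ X`. If the minimum does not drop, induction applies. Otherwise it suffices to
find an `i` such that contracting `x` in `Mᵢ` keeps the minimum on `X - x`: a large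
union-independent set of the contracted family, together with `x`, is union-independent in the
original family. If there is no such `i`, every `i` yields a tight set `Y ⊆ X - x` (one
attaining the minimum for `X`) that spans `x` in `Mᵢ`. By submodularity of the ranks, tight
sets and spanning `x` are preserved by unions, so the union of these sets is tight and spans `x`
in every `Mᵢ`; adding `x` to it lowers the bound below the minimum. -/

section Rank

variable {α : Type*} {Indep : Finset α → Prop} {I X Y : Finset α}

lemma bddAbove_rankOf_set (Indep : Finset α → Prop) (X : Finset α) :
    BddAbove {k : ℕ | ∃ I : Finset α, I ⊆ X ∧ Indep I ∧ I.card = k} :=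
  ⟨X.card, by rintro k ⟨I, hIX, -, rfl⟩; exact card_le_card hIX⟩

lemma le_rankOf (hIX : I ⊆ X) (hI : Indep I) : I.card ≤ rankOf Indep X :=
  le_csSup (bddAbove_rankOf_set Indep X) ⟨I, hIX, hI, rfl⟩

lemma rankOf_le {m : ℕ} (h₀ : Indep ∅) (h : ∀ I ⊆ X, Indep I → I.card ≤ m) :
    rankOf Indep X ≤ m :=
  csSup_le ⟨0, ∅, empty_subset X, h₀, rfl⟩ <| by
    rintro _ ⟨I, hIX, hI, rfl⟩
    exact h I hIX hI

lemma exists_card_eq_rankOf (h₀ : Indep ∅) (X : Finset α) :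
    ∃ I ⊆ X, Indep I ∧ I.card = rankOf Indep X :=
  Nat.sSup_mem (s := {k | ∃ I ⊆ X, Indep I ∧ I.card = k})
    ⟨0, ∅, empty_subset X, h₀, card_empty⟩ (bddAbove_rankOf_set Indep X)

lemma rankOf_mono (h₀ : Indep ∅) (hXY : X ⊆ Y) : rankOf Indep X ≤ rankOf Indep Y :=
  rankOf_le h₀ fun _ hIX hI => le_rankOf (hIX.trans hXY) hI

lemma rankOf_empty (h₀ : Indep ∅) : rankOf Indep (∅ : Finset α) = 0 :=
  Nat.le_zero.mp <| rankOf_le h₀ fun I hI _ => by simp [subset_empty.mp hI]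

end Rank

namespace FinMatroid

variable {α : Type*} [DecidableEq α] (M : FinMatroid α) {I X A : Finset α} {x : α}

lemma exists_superset_card_eq_rankOf (hIX : I ⊆ X) (hI : M.Indep I) :
    ∃ J, I ⊆ J ∧ J ⊆ X ∧ M.Indep J ∧ J.card = rankOf M.Indep X := by
  classical
  obtain ⟨J, hJmem, hJmax⟩ := exists_max_image
    (X.powerset.filter fun J => I ⊆ J ∧ M.Indep J) card ⟨I, by simp [hIX, hI]⟩
  simp only [mem_filter, mem_powerset] at hJmem hJmax
  obtain ⟨hJX, hIJ, hJ⟩ := hJmem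
  refine ⟨J, hIJ, hJX, hJ, (le_rankOf hJX hJ).antisymm (not_lt.mp fun hlt => ?_)⟩
  obtain ⟨B, hBX, hB, hBcard⟩ := exists_card_eq_rankOf M.indep_empty X
  obtain ⟨s, hs, hsJ⟩ := M.indep_aug hJ hB (hBcard ▸ hlt)
  obtain ⟨hsB, hsnJ⟩ := mem_sdiff.mp hs
  have hmax := hJmax (insert s J)
    ⟨insert_subset (hBX hsB) hJX, hIJ.trans (subset_insert s J), hsJ⟩
  rw [card_insert_of_notMem hsnJ] at hmax
  omega

lemma rankOf_union_add_rankOf_inter_le (A B : Finset α) :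
    rankOf M.Indep (A ∪ B) + rankOf M.Indep (A ∩ B) ≤
      rankOf M.Indep A + rankOf M.Indep B := by
  obtain ⟨I, hIAB, hI, hIcard⟩ := exists_card_eq_rankOf M.indep_empty (A ∩ B)
  obtain ⟨J, hIJ, hJAB, hJ, hJcard⟩ := M.exists_superset_card_eq_rankOf
    (hIAB.trans (inter_subset_left.trans subset_union_left)) hI
  have hJA := le_rankOf (inter_subset_right (s₁ := J) (s₂ := A))
    (M.indep_subset hJ inter_subset_left)
  have hJB := le_rankOf (inter_subset_right (s₁ := J) (s₂ := B))
    (M.indep_subset hJ inter_subset_left)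
  have hcard := card_union_add_card_inter (J ∩ A) (J ∩ B)
  rw [← inter_union_distrib_left, inter_eq_left.mpr hJAB,
    ← inter_inter_distrib_left] at hcard
  have hI_le := card_le_card (subset_inter hIJ hIAB)
  omega

lemma rankOf_insert_of_not_indep_singleton (hx : ¬ M.Indep {x}) (A : Finset α) :
    rankOf M.Indep (insert x A) = rankOf M.Indep A := by
  refine (rankOf_le M.indep_empty fun I hIA hI => le_rankOf (fun a ha => ?_) hI).antisymm
    (rankOf_mono M.indep_empty (subset_insert x A))
  refine (mem_insert.mp (hIA ha)).resolve_left ?_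
  rintro rfl
  exact hx (M.indep_subset hI (singleton_subset_iff.mpr ha))

lemma rankOf_insert_union_eq (hA : rankOf M.Indep (insert x A) = rankOf M.Indep A)
    (B : Finset α) :
    rankOf M.Indep (insert x (A ∪ B)) = rankOf M.Indep (A ∪ B) := by
  have hsub := M.rankOf_union_add_rankOf_inter_le (insert x A) (A ∪ B)
  rw [insert_union, ← union_assoc, union_self] at hsub
  have hA_le := rankOf_mono M.indep_empty
    (subset_inter (subset_insert x A) subset_union_left : A ⊆ insert x A ∩ (A ∪ B))
  have hmono := rankOf_mono M.indep_empty (subset_insert x (A ∪ B)) (Indep := M.Indep)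
  omega

def contract (x : α) (hx : M.Indep {x}) : FinMatroid α where
  Indep I := x ∉ I ∧ M.Indep (insert x I)
  indep_empty := ⟨notMem_empty x, by simpa using hx⟩
  indep_subset _ _ hJ hIJ :=
    ⟨fun h => hJ.1 (hIJ h), M.indep_subset hJ.2 (insert_subset_insert x hIJ)⟩
  indep_aug I J hI hJ hcard := by
    obtain ⟨s, hs, hsI⟩ := M.indep_aug hI.2 hJ.2 (by
      rwa [card_insert_of_notMem hI.1, card_insert_of_notMem hJ.1, Nat.add_lt_add_iff_right])
    simp only [mem_sdiff, mem_insert, not_or] at hs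
    obtain ⟨hsJ | hsJ, hsx, hsI'⟩ := hs
    · exact absurd hsJ hsx
    refine ⟨s, mem_sdiff.mpr ⟨hsJ, hsI'⟩, ?_, by rwa [insert_comm]⟩
    simpa [Ne.symm hsx] using hI.1

lemma rankOf_contract_add_one (hx : M.Indep {x}) {Z : Finset α} (hxZ : x ∉ Z) :
    rankOf (M.contract x hx).Indep Z + 1 = rankOf M.Indep (insert x Z) := by
  obtain ⟨I, hIZ, ⟨hxI, hI⟩, hIcard⟩ :=
    exists_card_eq_rankOf (M.contract x hx).indep_empty Z
  have hle := le_rankOf (insert_subset_insert x hIZ) hI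
  rw [card_insert_of_notMem hxI] at hle
  obtain ⟨J, hxJ, hJZ, hJ, hJcard⟩ :=
    M.exists_superset_card_eq_rankOf (singleton_subset_iff.mpr (mem_insert_self x Z)) hx
  have hxJ : x ∈ J := singleton_subset_iff.mp hxJ
  have hge : (J.erase x).card ≤ rankOf (M.contract x hx).Indep Z :=
    le_rankOf ((erase_subset_erase x hJZ).trans (erase_insert hxZ).subset)
      ⟨notMem_erase x J, by rwa [insert_erase hxJ]⟩
  rw [card_erase_of_mem hxJ] at hge
  have hJpos := card_pos.mpr ⟨x, hxJ⟩
  omega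

end FinMatroid

section Union

variable {α : Type*} [DecidableEq α] {n : ℕ} {M : Fin n → FinMatroid α} {I : Finset α}
  {x : α}

lemma unionIndep_empty (M : Fin n → FinMatroid α) : unionIndep M ∅ :=
  ⟨fun _ => ∅, fun i => (M i).indep_empty, by ext; simp⟩

lemma unionIndep_insert_of_update_contract {i : Fin n} (hx : (M i).Indep {x})
    (hI : unionIndep (Function.update M i ((M i).contract x hx)) I) :
    unionIndep M (insert x I) := by
  obtain ⟨f, hf, rfl⟩ := hI
  refine ⟨Function.update f i (insert x (f i)), fun j => ?_, ?_⟩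
  · rcases eq_or_ne j i with rfl | hji
    · have hfj := hf j
      rw [Function.update_self] at hfj
      simpa using hfj.2
    · simpa [hji] using hf j
  · ext a
    simp only [mem_insert, mem_biUnion, mem_univ, true_and, Function.update_apply]
    constructor
    · rintro (rfl | ⟨j, hj⟩)
      · exact ⟨i, by simp⟩
      · refine ⟨j, ?_⟩
        split_ifs with h
        · exact mem_insert_of_mem (h ▸ hj)
        · exact hj
    · rintro ⟨j, hj⟩
      split_ifs at hj with h
      · exact (mem_insert.mp hj).imp_right fun hj => ⟨i, hj⟩
      · exact Or.inr ⟨j, hj⟩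

end Union

section Bound

variable {α : Type*} [DecidableEq α] {n : ℕ} (M : Fin n → FinMatroid α)
  {I X Y A B : Finset α} {x : α}

noncomputable def unionBound (X Y : Finset α) : ℕ :=
  ∑ i, rankOf (M i).Indep Y + (X \ Y).card

noncomputable def unionBoundMin (X : Finset α) : ℕ :=
  X.powerset.inf' ⟨∅, empty_mem_powerset X⟩ (unionBound M X)

def IsTight (X Y : Finset α) : Prop :=
  Y ⊆ X ∧ unionBound M X Y = unionBoundMin M X

variable {M}

lemma card_le_unionBound (hIX : I ⊆ X) (hI : unionIndep M I) :
    I.card ≤ unionBound M X Y := by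
  obtain ⟨f, hf, rfl⟩ := hI
  set I := univ.biUnion f
  have hIY : (I ∩ Y).card ≤ ∑ i, (f i ∩ Y).card := by
    rw [biUnion_inter]
    exact card_biUnion_le
  have hfY : ∑ i, (f i ∩ Y).card ≤ ∑ i, rankOf (M i).Indep Y :=
    sum_le_sum fun i _ =>
      le_rankOf inter_subset_right ((M i).indep_subset (hf i) inter_subset_left)
  have hIX' := card_le_card (sdiff_subset_sdiff hIX (subset_refl Y))
  have hsplit := card_inter_add_card_sdiff I Y
  unfold unionBound
  omega

lemma unionBoundMin_le (hYX : Y ⊆ X) : unionBoundMin M X ≤ unionBound M X Y :=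
  inf'_le _ (mem_powerset.mpr hYX)

lemma exists_isTight (M : Fin n → FinMatroid α) (X : Finset α) : ∃ Y, IsTight M X Y := by
  obtain ⟨Y, hY, hval⟩ := exists_mem_eq_inf' ⟨∅, empty_mem_powerset X⟩ (unionBound M X)
  exact ⟨Y, mem_powerset.mp hY, hval.symm⟩

lemma unionBound_union_add_unionBound_inter_le (X A B : Finset α) :
    unionBound M X (A ∪ B) + unionBound M X (A ∩ B) ≤
      unionBound M X A + unionBound M X B := by
  have hrank : ∑ i, rankOf (M i).Indep (A ∪ B) + ∑ i, rankOf (M i).Indep (A ∩ B) ≤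
      ∑ i, rankOf (M i).Indep A + ∑ i, rankOf (M i).Indep B := by
    simp only [← sum_add_distrib]
    exact sum_le_sum fun i _ => (M i).rankOf_union_add_rankOf_inter_le A B
  have hcard := card_union_add_card_inter (X \ A) (X \ B)
  rw [← sdiff_inter_distrib_right, ← sdiff_union_distrib] at hcard
  unfold unionBound
  omega

lemma IsTight.union (hA : IsTight M X A) (hB : IsTight M X B) : IsTight M X (A ∪ B) := by
  obtain ⟨hAX, hAmin⟩ := hA
  obtain ⟨hBX, hBmin⟩ := hB
  have hsub := unionBound_union_add_unionBound_inter_le (M := M) X A B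
  have hunion := unionBoundMin_le (M := M) (union_subset hAX hBX)
  have hinter := unionBoundMin_le (M := M) ((inter_subset_left (s₂ := B)).trans hAX)
  exact ⟨union_subset hAX hBX, by omega⟩

lemma unionBound_eq_unionBound_erase_add_one (hxX : x ∈ X) (hxY : x ∉ Y) :
    unionBound M X Y = unionBound M (X.erase x) Y + 1 := by
  have hx : x ∈ X \ Y := mem_sdiff.mpr ⟨hxX, hxY⟩
  rw [unionBound, unionBound, erase_sdiff_comm, card_erase_of_mem hx, add_assoc,
    Nat.sub_add_cancel (card_pos.mpr ⟨x, hx⟩)]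

lemma unionBound_insert_add_one (hxX : x ∈ X) (hxY : x ∉ Y)
    (hspan : ∀ i, rankOf (M i).Indep (insert x Y) = rankOf (M i).Indep Y) :
    unionBound M X (insert x Y) + 1 = unionBound M X Y := by
  rw [unionBound_eq_unionBound_erase_add_one hxX hxY, unionBound, unionBound, sum_congr rfl
    fun i _ => hspan i, sdiff_insert, ← erase_sdiff_comm]

lemma unionBoundMin_le_unionBoundMin_erase_add_one (hxX : x ∈ X) :
    unionBoundMin M X ≤ unionBoundMin M (X.erase x) + 1 := by
  obtain ⟨Y, hYX, hYmin⟩ := exists_isTight M (X.erase x)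
  rw [← hYmin,
    ← unionBound_eq_unionBound_erase_add_one hxX (fun h => notMem_erase x X (hYX h))]
  exact unionBoundMin_le (hYX.trans (erase_subset x X))

lemma unionBound_update_contract_add {i : Fin n} (hx : (M i).Indep {x}) (hxY : x ∉ Y)
    (X : Finset α) :
    unionBound (Function.update M i ((M i).contract x hx)) X Y + rankOf (M i).Indep Y + 1 =
      unionBound M X Y + rankOf (M i).Indep (insert x Y) := by
  have hsum := sum_update_of_mem (mem_univ i) (fun j => rankOf (M j).Indep Y)
    (rankOf ((M i).contract x hx).Indep Y)
  have hsplit := add_sum_erase univ (fun j => rankOf (M j).Indep Y) (mem_univ i)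
  have hcontract := (M i).rankOf_contract_add_one hx hxY
  simp only [← Function.apply_update (fun _ N => rankOf (FinMatroid.Indep N) Y)] at hsum
  rw [sdiff_singleton_eq_erase] at hsum
  unfold unionBound
  omega

lemma exists_isTight_notMem (hxX : x ∈ X)
    (hk : unionBoundMin M (X.erase x) < unionBoundMin M X) : ∃ Y, IsTight M X Y ∧ x ∉ Y := by
  obtain ⟨Y, hYX, hYmin⟩ := exists_isTight M (X.erase x)
  have hxY : x ∉ Y := fun h => notMem_erase x X (hYX h)
  have hdrop := unionBoundMin_le_unionBoundMin_erase_add_one (M := M) hxX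
  refine ⟨Y, ⟨hYX.trans (erase_subset x X), ?_⟩, hxY⟩
  rw [unionBound_eq_unionBound_erase_add_one hxX hxY]
  omega

lemma exists_isTight_rankOf_insert_eq_of_contract (hxX : x ∈ X)
    (hk : unionBoundMin M (X.erase x) < unionBoundMin M X) {i : Fin n} (hx : (M i).Indep {x})
    (hlt : unionBoundMin (Function.update M i ((M i).contract x hx)) (X.erase x) <
      unionBoundMin M (X.erase x)) :
    ∃ Y, IsTight M X Y ∧ x ∉ Y ∧
      rankOf (M i).Indep (insert x Y) = rankOf (M i).Indep Y := by
  obtain ⟨Y, hYX, hYmin⟩ :=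
    exists_isTight (Function.update M i ((M i).contract x hx)) (X.erase x)
  have hxY : x ∉ Y := fun h => notMem_erase x X (hYX h)
  have hYX' : Y ⊆ X := hYX.trans (erase_subset x X)
  have hcontract := unionBound_update_contract_add hx hxY (X.erase x)
  have hmin := unionBoundMin_le (M := M) hYX'
  have hmono := rankOf_mono (M i).indep_empty (subset_insert x Y)
  have hdrop := unionBoundMin_le_unionBoundMin_erase_add_one (M := M) hxX
  rw [unionBound_eq_unionBound_erase_add_one hxX hxY] at hmin
  refine ⟨Y, ⟨hYX', ?_⟩, hxY, ?_⟩
  · rw [unionBound_eq_unionBound_erase_add_one hxX hxY]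
    omega
  · omega

lemma exists_isTight_forall_rankOf_insert_eq (h₀ : ∃ Y, IsTight M X Y ∧ x ∉ Y)
    (h : ∀ i, ∃ Y, IsTight M X Y ∧ x ∉ Y ∧
      rankOf (M i).Indep (insert x Y) = rankOf (M i).Indep Y) :
    ∃ Y, IsTight M X Y ∧ x ∉ Y ∧
      ∀ i, rankOf (M i).Indep (insert x Y) = rankOf (M i).Indep Y := by
  suffices ∀ S : Finset (Fin n), ∃ Y, IsTight M X Y ∧ x ∉ Y ∧
      ∀ i ∈ S, rankOf (M i).Indep (insert x Y) = rankOf (M i).Indep Y by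
    simpa using this univ
  intro S
  induction S using Finset.induction_on with
  | empty => simpa using h₀
  | insert i S _ ih =>
    obtain ⟨Y, hY, hxY, hS⟩ := ih
    obtain ⟨Yi, hYi, hxYi, hi⟩ := h i
    refine ⟨Yi ∪ Y, hYi.union hY, by simp [hxY, hxYi], fun j hj => ?_⟩
    rcases mem_insert.mp hj with rfl | hj
    · exact (M j).rankOf_insert_union_eq hi Y
    · rw [union_comm]
      exact (M j).rankOf_insert_union_eq (hS j hj) Yi

lemma exists_le_unionBoundMin_update_contract (hxX : x ∈ X)
    (hk : unionBoundMin M (X.erase x) < unionBoundMin M X) :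
    ∃ i, ∃ hx : (M i).Indep {x}, unionBoundMin M (X.erase x) ≤
      unionBoundMin (Function.update M i ((M i).contract x hx)) (X.erase x) := by
  by_contra! h
  have hspan : ∀ i, ∃ Y, IsTight M X Y ∧ x ∉ Y ∧
      rankOf (M i).Indep (insert x Y) = rankOf (M i).Indep Y := by
    intro i
    by_cases hx : (M i).Indep {x}
    · exact exists_isTight_rankOf_insert_eq_of_contract hxX hk hx (h i hx)
    · obtain ⟨Y, hY, hxY⟩ := exists_isTight_notMem hxX hk
      exact ⟨Y, hY, hxY, (M i).rankOf_insert_of_not_indep_singleton hx Y⟩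
  obtain ⟨Y, ⟨hYX, hYmin⟩, hxY, hY⟩ :=
    exists_isTight_forall_rankOf_insert_eq (exists_isTight_notMem hxX hk) hspan
  have hinsert := unionBound_insert_add_one hxX hxY hY
  have hmin := unionBoundMin_le (M := M) (insert_subset hxX hYX)
  omega

end Bound

lemma unionBoundMin_le_rankOf_unionIndep {α : Type*} [DecidableEq α] {n : ℕ}
    (M : Fin n → FinMatroid α) (X : Finset α) :
    unionBoundMin M X ≤ rankOf (unionIndep M) X := by
  induction X using Finset.strongInduction generalizing M with | _ X ih =>
  rcases X.eq_empty_or_nonempty with rfl | ⟨x, hxX⟩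
  · calc unionBoundMin M ∅ ≤ unionBound M ∅ ∅ := unionBoundMin_le (subset_refl ∅)
      _ = 0 := by simp [unionBound, rankOf_empty (M _).indep_empty]
      _ ≤ _ := Nat.zero_le _
  have hX := erase_ssubset hxX
  by_cases hk : unionBoundMin M X ≤ unionBoundMin M (X.erase x)
  · exact hk.trans ((ih _ hX M).trans (rankOf_mono (unionIndep_empty M) (erase_subset x X)))
  obtain ⟨i, hx, hle⟩ := exists_le_unionBoundMin_update_contract hxX (not_le.mp hk)
  obtain ⟨I, hIX, hI, hIcard⟩ := exists_card_eq_rankOf (unionIndep_empty _) (X.erase x)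
  have hxI : x ∉ I := fun h => notMem_erase x X (hIX h)
  calc unionBoundMin M X ≤ unionBoundMin M (X.erase x) + 1 :=
        unionBoundMin_le_unionBoundMin_erase_add_one hxX
    _ ≤ I.card + 1 := by rw [hIcard]; exact Nat.add_le_add_right (hle.trans (ih _ hX _)) 1
    _ = (insert x I).card := (card_insert_of_notMem hxI).symm
    _ ≤ rankOf (unionIndep M) X :=
        le_rankOf (insert_subset hxX (hIX.trans (erase_subset x X)))
          (unionIndep_insert_of_update_contract hx hI)

/-- Matroid union theorem (Nash-Williams): the rank of the union `M₁ ∨ ⋯ ∨ Mₙ`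
at `X` equals `min_{Y ⊆ X} (∑ᵢ rᵢ(Y) + |X \ Y|)`. -/
theorem matroid_union_rank {α : Type*} [DecidableEq α] {n : ℕ}
    (M : Fin n → FinMatroid α) (X : Finset α) :
    rankOf (unionIndep M) X =
      X.powerset.inf' ⟨∅, Finset.empty_mem_powerset X⟩
        (fun Y => (∑ i, rankOf (M i).Indep Y) + (X \ Y).card) := by
  refine le_antisymm (rankOf_le (unionIndep_empty M) fun I hIX hI => ?_)
    (unionBoundMin_le_rankOf_unionIndep M X)
  obtain ⟨Y, -, hYmin⟩ := exists_isTight M X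
  exact (card_le_unionBound hIX hI).trans_eq hYmin
end

section
/- Let Δₙ (n ≥ 4) be the simplicial complex on the 3n-element ground set {x_{ij} : 1 ≤ i ≤ n, 1 ≤ j ≤ 3} whose minimal nonfaces are all subsets whose profile is, up to permutation of the indices i, equal to (3,3,0,…,0), (3,2,2,0,…,0), or (2,2,2,2,0,…,0). Then every facet of Δₙ has profile equal, up to permutation of the indices i, to (3,2,1,1,…,1) or (2,2,2,1,1,…,1); in particular Δₙ is pure of dimension n+2. -/
open Finset

/-- The profile of a subset `U` of the ground set `{x_{ij}} = Fin n × Fin 3`: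
`profile U i` is the number of `j` with `x_{ij} ∈ U`. -/
def profileOf {n : ℕ} (U : Finset (Fin n × Fin 3)) (i : Fin n) : ℕ :=
  (U.filter (fun p => p.1 = i)).card

/-- A profile is *bad* if, up to permutation of the indices, it equals
`(3,3,0,…,0)`, `(3,2,2,0,…,0)` or `(2,2,2,2,0,…,0)`. -/
def IsBadProfile {n : ℕ} (c : Fin n → ℕ) : Prop :=
  (∃ i j, i ≠ j ∧ c i = 3 ∧ c j = 3 ∧ ∀ k, k ≠ i → k ≠ j → c k = 0) ∨
  (∃ i j k, i ≠ j ∧ i ≠ k ∧ j ≠ k ∧ c i = 3 ∧ c j = 2 ∧ c k = 2 ∧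
    ∀ l, l ≠ i → l ≠ j → l ≠ k → c l = 0) ∨
  (∃ i j k l, i ≠ j ∧ i ≠ k ∧ i ≠ l ∧ j ≠ k ∧ j ≠ l ∧ k ≠ l ∧
    c i = 2 ∧ c j = 2 ∧ c k = 2 ∧ c l = 2 ∧
    ∀ m, m ≠ i → m ≠ j → m ≠ k → m ≠ l → c m = 0)

/-- `U` is a face of the simplicial complex `Δₙ`: it contains no (minimal)
nonface, i.e. no subset whose profile is bad. -/
def IsFaceD (n : ℕ) (U : Finset (Fin n × Fin 3)) : Prop :=
  ¬ ∃ W : Finset (Fin n × Fin 3), W ⊆ U ∧ IsBadProfile (profileOf W)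

/-- `U` is a facet (maximal face) of `Δₙ`. -/
def IsFacetD (n : ℕ) (U : Finset (Fin n × Fin 3)) : Prop :=
  IsFaceD n U ∧ ∀ W : Finset (Fin n × Fin 3), IsFaceD n W → U ⊆ W → W = U

/-- A profile is a permutation of `(3,2,1,1,…,1)`. -/
def IsProfile321 {n : ℕ} (c : Fin n → ℕ) : Prop :=
  ∃ i j, i ≠ j ∧ c i = 3 ∧ c j = 2 ∧ ∀ k, k ≠ i → k ≠ j → c k = 1

/-- A profile is a permutation of `(2,2,2,1,…,1)`. -/
def IsProfile2221 {n : ℕ} (c : Fin n → ℕ) : Prop :=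
  ∃ i j k, i ≠ j ∧ i ≠ k ∧ j ≠ k ∧ c i = 2 ∧ c j = 2 ∧ c k = 2 ∧
    ∀ l, l ≠ i → l ≠ j → l ≠ k → c l = 1

/-! ### Auxiliary definitions and lemmas -/

/-- A profile-level reformulation of the face condition. -/
def Pp {n : ℕ} (c : Fin n → ℕ) : Prop :=
  (¬ ∃ i j, i ≠ j ∧ 3 ≤ c i ∧ 3 ≤ c j) ∧
  (¬ ∃ i j k, i ≠ j ∧ i ≠ k ∧ j ≠ k ∧ 3 ≤ c i ∧ 2 ≤ c j ∧ 2 ≤ c k) ∧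
  (¬ ∃ i j k l, i ≠ j ∧ i ≠ k ∧ i ≠ l ∧ j ≠ k ∧ j ≠ l ∧ k ≠ l ∧
      2 ≤ c i ∧ 2 ≤ c j ∧ 2 ≤ c k ∧ 2 ≤ c l)

lemma profileOf_mono {n : ℕ} {U V : Finset (Fin n × Fin 3)} (h : U ⊆ V) (i : Fin n) :
    profileOf U i ≤ profileOf V i :=
  Finset.card_le_card (Finset.filter_subset_filter _ h)

lemma profileOf_eq_card {n : ℕ} (U : Finset (Fin n × Fin 3)) (i : Fin n) :
    profileOf U i = ((univ : Finset (Fin 3)).filter (fun j => (i, j) ∈ U)).card := by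
  rw [profileOf]
  have h : U.filter (fun p => p.1 = i)
      = ((univ : Finset (Fin 3)).filter (fun j => (i, j) ∈ U)).image (fun j => (i, j)) := by
    ext p
    obtain ⟨a, b⟩ := p
    simp only [Finset.mem_filter, Finset.mem_image, Finset.mem_univ, true_and]
    constructor
    · rintro ⟨hU, rfl⟩; exact ⟨b, hU, rfl⟩
    · rintro ⟨j, hj, h⟩
      injection h with h1 h2
      subst h1; subst h2
      exact ⟨hj, rfl⟩
  rw [h, Finset.card_image_of_injective _ (fun a b hab => by simpa using hab)]

lemma profileOf_le_three {n : ℕ} (U : Finset (Fin n × Fin 3)) (i : Fin n) :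
    profileOf U i ≤ 3 := by
  rw [profileOf_eq_card]
  calc _ ≤ (univ : Finset (Fin 3)).card := Finset.card_le_card (Finset.filter_subset _ _)
    _ = 3 := by simp

lemma card_eq_sum_profile {n : ℕ} (U : Finset (Fin n × Fin 3)) :
    U.card = ∑ i, profileOf U i :=
  Finset.card_eq_sum_card_fiberwise (fun x _ => Finset.mem_univ x.1)

lemma profileOf_insert {n : ℕ} (U : Finset (Fin n × Fin 3)) (i : Fin n) (j : Fin 3)
    (h : (i, j) ∉ U) :
    profileOf (insert (i, j) U) = fun m => if m = i then profileOf U i + 1 else profileOf U m := by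
  funext m
  rw [profileOf, Finset.filter_insert]
  by_cases hm : m = i
  · subst hm
    rw [if_pos rfl, if_pos rfl,
      Finset.card_insert_of_notMem (fun hc => h (Finset.mem_filter.mp hc).1)]
    rfl
  · rw [if_neg (fun hc : (i : Fin n) = m => hm hc.symm), if_neg hm]
    rfl

lemma exists_notMem_of_lt_three {n : ℕ} (U : Finset (Fin n × Fin 3)) (i : Fin n)
    (h : profileOf U i < 3) : ∃ j, (i, j) ∉ U := by
  by_contra hc
  push_neg at hc
  rw [profileOf_eq_card] at h
  have : (univ : Finset (Fin 3)).filter (fun j => (i, j) ∈ U) = univ := by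
    apply Finset.filter_true_of_mem
    intro j _; exact hc j
  rw [this] at h
  simp at h

lemma profileOf_of_fiber {n : ℕ} {t : Finset (Fin n × Fin 3)} {i : Fin n}
    (h : ∀ p ∈ t, p.1 = i) (m : Fin n) :
    profileOf t m = if m = i then t.card else 0 := by
  rw [profileOf]
  by_cases hm : m = i
  · subst hm
    rw [if_pos rfl, Finset.filter_true_of_mem h]
  · rw [if_neg hm, Finset.card_eq_zero, Finset.filter_eq_empty_iff]
    intro p hp hc
    exact hm (hc ▸ h p hp)

lemma profileOf_union {n : ℕ} {s t : Finset (Fin n × Fin 3)} (h : Disjoint s t) (m : Fin n) :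
    profileOf (s ∪ t) m = profileOf s m + profileOf t m := by
  rw [profileOf, profileOf, profileOf, Finset.filter_union,
    Finset.card_union_of_disjoint (Finset.disjoint_filter_filter h)]

lemma exists_fiber_subset {n : ℕ} (U : Finset (Fin n × Fin 3)) (i : Fin n) (m : ℕ)
    (h : m ≤ profileOf U i) :
    ∃ t : Finset (Fin n × Fin 3), t ⊆ U ∧ (∀ p ∈ t, p.1 = i) ∧ t.card = m := by
  have h' : m ≤ (U.filter (fun p => p.1 = i)).card := h
  obtain ⟨t, ht, hc⟩ := Finset.exists_subset_card_eq h'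
  exact ⟨t, fun p hp => (Finset.mem_filter.mp (ht hp)).1,
    fun p hp => (Finset.mem_filter.mp (ht hp)).2, hc⟩

lemma disj_fibers {n : ℕ} {t s : Finset (Fin n × Fin 3)} {i j : Fin n} (hij : i ≠ j)
    (ht : ∀ p ∈ t, p.1 = i) (hs : ∀ p ∈ s, p.1 = j) : Disjoint t s := by
  rw [Finset.disjoint_left]
  intro p hp1 hp2
  exact hij ((ht p hp1).symm.trans (hs p hp2))

lemma not_Pp_of_bad_le {n : ℕ} {d c : Fin n → ℕ} (hle : ∀ m, d m ≤ c m)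
    (hbad : IsBadProfile d) : ¬ Pp c := by
  intro hP
  rcases hbad with ⟨i,j,hij,hi,hj,_⟩ | ⟨i,j,k,hij,hik,hjk,hi,hj,hk,_⟩ |
    ⟨i,j,k,l,hij,hik,hil,hjk,hjl,hkl,hi,hj,hk,hl,_⟩
  · exact hP.1 ⟨i, j, hij, by have := hle i; omega, by have := hle j; omega⟩
  · exact hP.2.1 ⟨i, j, k, hij, hik, hjk, by have := hle i; omega,
      by have := hle j; omega, by have := hle k; omega⟩
  · exact hP.2.2 ⟨i, j, k, l, hij, hik, hil, hjk, hjl, hkl, by have := hle i; omega,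
      by have := hle j; omega, by have := hle k; omega, by have := hle l; omega⟩

lemma face_iff {n : ℕ} (U : Finset (Fin n × Fin 3)) : IsFaceD n U ↔ Pp (profileOf U) := by
  constructor
  · intro hface
    by_contra hP
    apply hface
    rw [Pp] at hP
    rw [not_and_or, not_and_or] at hP
    rcases hP with h1 | h2 | h3
    · rw [not_not] at h1
      obtain ⟨i, j, hij, hi, hj⟩ := h1
      obtain ⟨t1, ht1U, ht1f, ht1c⟩ := exists_fiber_subset U i 3 hi
      obtain ⟨t2, ht2U, ht2f, ht2c⟩ := exists_fiber_subset U j 3 hj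
      have d12 := disj_fibers hij ht1f ht2f
      have key : ∀ m, profileOf (t1 ∪ t2) m =
          (if m = i then 3 else 0) + (if m = j then 3 else 0) := by
        intro m
        rw [profileOf_union d12, profileOf_of_fiber ht1f, profileOf_of_fiber ht2f, ht1c, ht2c]
      refine ⟨t1 ∪ t2, Finset.union_subset ht1U ht2U,
        Or.inl ⟨i, j, hij, ?_, ?_, ?_⟩⟩
      · rw [key]; simp [hij]
      · rw [key]; simp [hij.symm]
      · intro k hk1 hk2; rw [key]; simp [hk1, hk2]
    · rw [not_not] at h2
      obtain ⟨i, j, k, hij, hik, hjk, hi, hj, hk⟩ := h2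
      obtain ⟨t1, ht1U, ht1f, ht1c⟩ := exists_fiber_subset U i 3 hi
      obtain ⟨t2, ht2U, ht2f, ht2c⟩ := exists_fiber_subset U j 2 hj
      obtain ⟨t3, ht3U, ht3f, ht3c⟩ := exists_fiber_subset U k 2 hk
      have d12 := disj_fibers hij ht1f ht2f
      have d3 : Disjoint (t1 ∪ t2) t3 :=
        Finset.disjoint_union_left.mpr ⟨disj_fibers hik ht1f ht3f, disj_fibers hjk ht2f ht3f⟩
      have key : ∀ m, profileOf (t1 ∪ t2 ∪ t3) m =
          (if m = i then 3 else 0) + (if m = j then 2 else 0) + (if m = k then 2 else 0) := by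
        intro m
        rw [profileOf_union d3, profileOf_union d12, profileOf_of_fiber ht1f,
          profileOf_of_fiber ht2f, profileOf_of_fiber ht3f, ht1c, ht2c, ht3c]
      refine ⟨t1 ∪ t2 ∪ t3, Finset.union_subset (Finset.union_subset ht1U ht2U) ht3U,
        Or.inr (Or.inl ⟨i, j, k, hij, hik, hjk, ?_, ?_, ?_, ?_⟩)⟩
      · rw [key]; simp [hij, hik]
      · rw [key]; simp [hij.symm, hjk]
      · rw [key]; simp [hik.symm, hjk.symm]
      · intro l hl1 hl2 hl3; rw [key]; simp [hl1, hl2, hl3]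
    · rw [not_not] at h3
      obtain ⟨i, j, k, l, hij, hik, hil, hjk, hjl, hkl, hi, hj, hk, hl⟩ := h3
      obtain ⟨t1, ht1U, ht1f, ht1c⟩ := exists_fiber_subset U i 2 hi
      obtain ⟨t2, ht2U, ht2f, ht2c⟩ := exists_fiber_subset U j 2 hj
      obtain ⟨t3, ht3U, ht3f, ht3c⟩ := exists_fiber_subset U k 2 hk
      obtain ⟨t4, ht4U, ht4f, ht4c⟩ := exists_fiber_subset U l 2 hl
      have d12 := disj_fibers hij ht1f ht2f
      have d3 : Disjoint (t1 ∪ t2) t3 :=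
        Finset.disjoint_union_left.mpr ⟨disj_fibers hik ht1f ht3f, disj_fibers hjk ht2f ht3f⟩
      have d4 : Disjoint (t1 ∪ t2 ∪ t3) t4 :=
        Finset.disjoint_union_left.mpr ⟨Finset.disjoint_union_left.mpr
          ⟨disj_fibers hil ht1f ht4f, disj_fibers hjl ht2f ht4f⟩, disj_fibers hkl ht3f ht4f⟩
      have key : ∀ m, profileOf (t1 ∪ t2 ∪ t3 ∪ t4) m =
          (if m = i then 2 else 0) + (if m = j then 2 else 0) + (if m = k then 2 else 0)
            + (if m = l then 2 else 0) := by
        intro m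
        rw [profileOf_union d4, profileOf_union d3, profileOf_union d12,
          profileOf_of_fiber ht1f, profileOf_of_fiber ht2f, profileOf_of_fiber ht3f,
          profileOf_of_fiber ht4f, ht1c, ht2c, ht3c, ht4c]
      refine ⟨t1 ∪ t2 ∪ t3 ∪ t4,
        Finset.union_subset (Finset.union_subset (Finset.union_subset ht1U ht2U) ht3U) ht4U,
        Or.inr (Or.inr ⟨i, j, k, l, hij, hik, hil, hjk, hjl, hkl, ?_, ?_, ?_, ?_, ?_⟩)⟩
      · rw [key]; simp [hij, hik, hil]
      · rw [key]; simp [hij.symm, hjk, hjl]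
      · rw [key]; simp [hik.symm, hjk.symm, hkl]
      · rw [key]; simp [hil.symm, hjl.symm, hkl.symm]
      · intro m hm1 hm2 hm3 hm4; rw [key]; simp [hm1, hm2, hm3, hm4]
  · rintro hP ⟨W, hWU, hbad⟩
    exact not_Pp_of_bad_le (fun m => profileOf_mono hWU m) hbad hP

lemma Pp_of_small {n : ℕ} {c c' : Fin n → ℕ}
    (h2 : ∀ m, 2 ≤ c' m → c' m ≤ c m) (hP : Pp c) : Pp c' := by
  refine ⟨?_, ?_, ?_⟩
  · rintro ⟨a, b, hab, ha, hb⟩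
    exact hP.1 ⟨a, b, hab, le_trans ha (h2 a (by omega)), le_trans hb (h2 b (by omega))⟩
  · rintro ⟨a, b, d, hab, had, hbd, ha, hb, hd⟩
    exact hP.2.1 ⟨a, b, d, hab, had, hbd, le_trans ha (h2 a (by omega)),
      le_trans hb (h2 b (by omega)), le_trans hd (h2 d (by omega))⟩
  · rintro ⟨a, b, d, e, hab, had, hae, hbd, hbe, hde, ha, hb, hd, he⟩
    exact hP.2.2 ⟨a, b, d, e, hab, had, hae, hbd, hbe, hde, le_trans ha (h2 a ha),
      le_trans hb (h2 b hb), le_trans hd (h2 d hd), le_trans he (h2 e he)⟩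

lemma Pp_32 {n : ℕ} {c' : Fin n → ℕ} {i k : Fin n} (hik : i ≠ k)
    (hi : c' i = 3) (hk : c' k = 2) (ho : ∀ m, m ≠ i → m ≠ k → c' m ≤ 1) : Pp c' := by
  have mem2 : ∀ m, 2 ≤ c' m → m = i ∨ m = k := by
    intro m hm
    by_cases h1 : m = i
    · exact Or.inl h1
    by_cases h2 : m = k
    · exact Or.inr h2
    exact absurd (ho m h1 h2) (by omega)
  have mem3 : ∀ m, 3 ≤ c' m → m = i := by
    intro m hm
    rcases mem2 m (by omega) with h | h
    · exact h
    · subst h; omega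
  refine ⟨?_, ?_, ?_⟩
  · rintro ⟨a, b, hab, ha, hb⟩
    exact hab ((mem3 a ha).trans (mem3 b hb).symm)
  · rintro ⟨a, b, d, hab, had, hbd, ha, hb, hd⟩
    have ha' := mem3 a ha
    rcases mem2 b hb with h | h
    · exact hab (ha'.trans h.symm)
    rcases mem2 d hd with h' | h'
    · exact had (ha'.trans h'.symm)
    exact hbd (h.trans h'.symm)
  · rintro ⟨a, b, d, e, hab, had, hae, hbd, hbe, hde, ha, hb, hd, he⟩
    rcases mem2 a ha with h1 | h1 <;> rcases mem2 b hb with h2 | h2 <;>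
      rcases mem2 d hd with h3 | h3 <;> subst h1 <;> subst h2 <;> simp_all

lemma Pp_noThree {n : ℕ} {c' : Fin n → ℕ} (hle : ∀ m, c' m ≤ 2) (k : Fin n)
    (h : ¬ ∃ a b d : Fin n, a ≠ b ∧ a ≠ d ∧ b ≠ d ∧
        2 ≤ c' a ∧ 2 ≤ c' b ∧ 2 ≤ c' d ∧ a ≠ k ∧ b ≠ k ∧ d ≠ k) : Pp c' := by
  refine ⟨?_, ?_, ?_⟩
  · rintro ⟨a, b, hab, ha, hb⟩
    exact absurd (hle a) (by omega)
  · rintro ⟨a, b, d, hab, had, hbd, ha, hb, hd⟩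
    exact absurd (hle a) (by omega)
  · rintro ⟨a, b, d, e, hab, had, hae, hbd, hbe, hde, ha, hb, hd, he⟩
    by_cases h1 : a = k
    · subst h1
      exact h ⟨b, d, e, hbd, hbe, hde, hb, hd, he, Ne.symm hab, Ne.symm had, Ne.symm hae⟩
    by_cases h2 : b = k
    · subst h2
      exact h ⟨a, d, e, had, hae, hde, ha, hd, he, h1, Ne.symm hbd, Ne.symm hbe⟩
    by_cases h3 : d = k
    · subst h3
      exact h ⟨a, b, e, hab, hae, hbe, ha, hb, he, h1, h2, Ne.symm hde⟩
    exact h ⟨a, b, d, hab, had, hbd, ha, hb, hd, h1, h2, h3⟩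

lemma profile_classify {n : ℕ} (hn : 4 ≤ n) (c : Fin n → ℕ) (h3 : ∀ i, c i ≤ 3)
    (hP : Pp c)
    (hmax : ∀ i, c i < 3 → ¬ Pp (fun m => if m = i then c i + 1 else c m)) :
    IsProfile321 c ∨ IsProfile2221 c := by
  have h1 : ∀ i, 1 ≤ c i := by
    intro i
    by_contra hi
    have hi0 : c i = 0 := by omega
    apply hmax i (by omega)
    apply Pp_of_small (c := c) _ hP
    intro m hm
    by_cases h : m = i
    · subst h
      rw [if_pos rfl] at hm ⊢
      omega
    · rw [if_neg h] at hm ⊢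
  by_cases hex3 : ∃ i, c i = 3
  · obtain ⟨i, hi⟩ := hex3
    by_cases hex2 : ∃ j, j ≠ i ∧ c j = 2
    · obtain ⟨j, hji, hj⟩ := hex2
      left
      refine ⟨i, j, Ne.symm hji, hi, hj, ?_⟩
      intro k hki hkj
      have hk3 : c k ≠ 3 := fun h => hP.1 ⟨i, k, Ne.symm hki, by omega, by omega⟩
      have hk2 : c k ≠ 2 := fun h =>
        hP.2.1 ⟨i, j, k, Ne.symm hji, Ne.symm hki, Ne.symm hkj, by omega, by omega, by omega⟩
      have := h1 k
      have := h3 k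
      omega
    · exfalso
      push_neg at hex2
      have hone : ∀ j, j ≠ i → c j = 1 := by
        intro j hji
        have hj3 : c j ≠ 3 := fun h => hP.1 ⟨i, j, Ne.symm hji, by omega, by omega⟩
        have := hex2 j hji
        have := h1 j
        have := h3 j
        omega
      obtain ⟨k, hk⟩ : ∃ k : Fin n, k ≠ i := by
        by_cases h : i = ⟨0, by omega⟩
        · exact ⟨⟨1, by omega⟩, by rw [h]; simp [Fin.ext_iff]⟩
        · exact ⟨⟨0, by omega⟩, fun hc => h hc.symm⟩
      apply hmax k (by have := hone k hk; omega)
      have hck : c k = 1 := hone k hk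
      apply Pp_32 (i := i) (k := k) (Ne.symm hk)
      · show (if i = k then c k + 1 else c i) = 3
        rw [if_neg (fun h => hk h.symm)]; exact hi
      · show (if k = k then c k + 1 else c k) = 2
        rw [if_pos rfl]; omega
      · intro m hmi hmk
        show (if m = k then c k + 1 else c m) ≤ 1
        rw [if_neg hmk]
        exact le_of_eq (hone m hmi)
  · push_neg at hex3
    have hle2 : ∀ i, c i ≤ 2 := by intro i; have := h3 i; have := hex3 i; omega
    by_cases hex2 : ∃ i j k : Fin n, i ≠ j ∧ i ≠ k ∧ j ≠ k ∧ c i = 2 ∧ c j = 2 ∧ c k = 2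
    · obtain ⟨i, j, k, hij, hik, hjk, hi, hj, hk⟩ := hex2
      right
      refine ⟨i, j, k, hij, hik, hjk, hi, hj, hk, ?_⟩
      intro l hli hlj hlk
      have hl2 : c l ≠ 2 := fun h => hP.2.2 ⟨i, j, k, l, hij, hik, Ne.symm hli, hjk,
        Ne.symm hlj, Ne.symm hlk, by omega, by omega, by omega, by omega⟩
      have := h1 l
      have := hle2 l
      omega
    · exfalso
      obtain ⟨k, hk⟩ : ∃ k : Fin n, c k = 1 := by
        by_contra hc
        push_neg at hc
        have hall : ∀ m : Fin n, c m = 2 := by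
          intro m; have := h1 m; have := hle2 m; have := hc m; omega
        refine hex2 ⟨⟨0, by omega⟩, ⟨1, by omega⟩, ⟨2, by omega⟩, ?_, ?_, ?_,
          hall _, hall _, hall _⟩ <;> simp [Fin.ext_iff]
      apply hmax k (by omega)
      apply Pp_noThree (k := k)
      · intro m
        show (if m = k then c k + 1 else c m) ≤ 2
        by_cases h : m = k
        · rw [if_pos h]; omega
        · rw [if_neg h]; exact hle2 m
      · rintro ⟨a, b, d, hab, had, hbd, ha, hb, hd, hak, hbk, hdk⟩
        rw [if_neg hak] at ha
        rw [if_neg hbk] at hb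
        rw [if_neg hdk] at hd
        exact hex2 ⟨a, b, d, hab, had, hbd, by have := hle2 a; omega,
          by have := hle2 b; omega, by have := hle2 d; omega⟩

lemma sum_profile321 {n : ℕ} {c : Fin n → ℕ} (h : IsProfile321 c) :
    ∑ m, c m = n + 3 := by
  obtain ⟨i, j, hij, hi, hj, ho⟩ := h
  have key : ∀ m : Fin n, c m = 1 + ((if m = i then 2 else 0) + (if m = j then 1 else 0)) := by
    intro m
    by_cases h1 : m = i
    · subst h1; rw [if_pos rfl, if_neg hij]; omega
    · by_cases h2 : m = j
      · subst h2; rw [if_neg h1, if_pos rfl]; omega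
      · rw [if_neg h1, if_neg h2]; have := ho m h1 h2; omega
  rw [Finset.sum_congr rfl (fun m _ => key m)]
  rw [Finset.sum_add_distrib, Finset.sum_add_distrib, Finset.sum_ite_eq' univ i (fun _ => 2),
    Finset.sum_ite_eq' univ j (fun _ => 1)]
  simp [Finset.card_univ]

lemma sum_profile2221 {n : ℕ} {c : Fin n → ℕ} (h : IsProfile2221 c) :
    ∑ m, c m = n + 3 := by
  obtain ⟨i, j, k, hij, hik, hjk, hi, hj, hk, ho⟩ := h
  have key : ∀ m : Fin n, c m = 1 + ((if m = i then 1 else 0) + ((if m = j then 1 else 0)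
      + (if m = k then 1 else 0))) := by
    intro m
    by_cases h1 : m = i
    · subst h1; rw [if_pos rfl, if_neg hij, if_neg hik]; omega
    · by_cases h2 : m = j
      · subst h2; rw [if_neg h1, if_pos rfl, if_neg hjk]; omega
      · by_cases h3 : m = k
        · subst h3; rw [if_neg h1, if_neg h2, if_pos rfl]; omega
        · rw [if_neg h1, if_neg h2, if_neg h3]; have := ho m h1 h2 h3; omega
  rw [Finset.sum_congr rfl (fun m _ => key m)]
  rw [Finset.sum_add_distrib, Finset.sum_add_distrib, Finset.sum_add_distrib,
    Finset.sum_ite_eq' univ i (fun _ => 1), Finset.sum_ite_eq' univ j (fun _ => 1),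
    Finset.sum_ite_eq' univ k (fun _ => 1)]
  simp [Finset.card_univ]

/-- Every facet of `Δₙ` (`n ≥ 4`) has profile a permutation of `(3,2,1,1,…,1)`
or `(2,2,2,1,1,…,1)`; in particular `Δₙ` is pure of dimension `n + 2`. -/
theorem facets_of_Delta_n (n : ℕ) (hn : 4 ≤ n) :
    (∀ U : Finset (Fin n × Fin 3), IsFacetD n U →
      (IsProfile321 (profileOf U) ∨ IsProfile2221 (profileOf U)) ∧ U.card = n + 3) ∧
    ∃ U : Finset (Fin n × Fin 3), IsFacetD n U := by
  constructor
  · intro U hU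
    have hP : Pp (profileOf U) := (face_iff U).mp hU.1
    have hmax : ∀ i, profileOf U i < 3 →
        ¬ Pp (fun m => if m = i then profileOf U i + 1 else profileOf U m) := by
      intro i hci hPp'
      obtain ⟨j, hj⟩ := exists_notMem_of_lt_three U i hci
      have hne : insert (i, j) U ≠ U := fun h => hj (h ▸ Finset.mem_insert_self _ _)
      apply hne
      apply hU.2 _ _ (Finset.subset_insert _ _)
      rw [face_iff, profileOf_insert U i j hj]
      exact hPp'
    have hclass := profile_classify hn (profileOf U) (profileOf_le_three U) hP hmax
    refine ⟨hclass, ?_⟩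
    rw [card_eq_sum_profile]
    rcases hclass with h | h
    · exact sum_profile321 h
    · exact sum_profile2221 h
  · -- existence of a facet with profile (3,2,1,…,1)
    have h01 : (⟨0, by omega⟩ : Fin n) ≠ ⟨1, by omega⟩ := by simp [Fin.ext_iff]
    set i0 : Fin n := ⟨0, by omega⟩ with hi0def
    set i1 : Fin n := ⟨1, by omega⟩ with hi1def
    set U : Finset (Fin n × Fin 3) := univ.filter
      (fun p => p.1 = i0 ∨ (p.1 = i1 ∧ p.2 ≠ 2) ∨ (p.1 ≠ i0 ∧ p.1 ≠ i1 ∧ p.2 = 0)) with hUdef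
    have hmem : ∀ (m : Fin n) (j : Fin 3), (m, j) ∈ U ↔
        (m = i0 ∨ (m = i1 ∧ j ≠ 2) ∨ (m ≠ i0 ∧ m ≠ i1 ∧ j = 0)) := by
      intro m j
      simp [hUdef]
    have hprof : ∀ m : Fin n, profileOf U m = if m = i0 then 3 else if m = i1 then 2 else 1 := by
      intro m
      rw [profileOf_eq_card]
      by_cases h0 : m = i0
      · rw [if_pos h0, Finset.filter_true_of_mem (fun j _ => (hmem m j).mpr (Or.inl h0))]
        simp
      · by_cases h1 : m = i1
        · rw [if_neg h0, if_pos h1]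
          have : (univ : Finset (Fin 3)).filter (fun j => (m, j) ∈ U)
              = (univ : Finset (Fin 3)).filter (fun j => j ≠ 2) := by
            ext j
            simp only [Finset.mem_filter, Finset.mem_univ, true_and, hmem]
            constructor
            · rintro (h | ⟨_, hj⟩ | ⟨_, hc, _⟩)
              · exact absurd h h0
              · exact hj
              · exact absurd h1 hc
            · intro hj; exact Or.inr (Or.inl ⟨h1, hj⟩)
          rw [this]
          decide
        · rw [if_neg h0, if_neg h1]
          have : (univ : Finset (Fin 3)).filter (fun j => (m, j) ∈ U)
              = (univ : Finset (Fin 3)).filter (fun j => j = 0) := by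
            ext j
            simp only [Finset.mem_filter, Finset.mem_univ, true_and, hmem]
            constructor
            · rintro (h | ⟨h, _⟩ | ⟨_, _, hj⟩)
              · exact absurd h h0
              · exact absurd h h1
              · exact hj
            · intro hj; exact Or.inr (Or.inr ⟨h0, h1, hj⟩)
          rw [this]
          decide
    have hprofile : IsProfile321 (profileOf U) := by
      refine ⟨i0, i1, h01, ?_, ?_, ?_⟩
      · rw [hprof, if_pos rfl]
      · rw [hprof, if_neg (Ne.symm h01), if_pos rfl]
      · intro k hk0 hk1
        rw [hprof, if_neg hk0, if_neg hk1]
    have hface : IsFaceD n U := by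
      rw [face_iff]
      obtain ⟨i, j, hij, hi, hj, ho⟩ := hprofile
      exact Pp_32 hij hi hj (fun m hm1 hm2 => le_of_eq (ho m hm1 hm2))
    refine ⟨U, hface, ?_⟩
    intro V hVface hsub
    have hd : Pp (profileOf V) := (face_iff V).mp hVface
    have h2U : profileOf U i1 = 2 := by rw [hprof, if_neg (Ne.symm h01), if_pos rfl]
    have h30 : profileOf V i0 = 3 := by
      have hle := profileOf_le_three V i0
      have hge := profileOf_mono hsub i0
      rw [hprof, if_pos rfl] at hge
      omega
    have h2V : 2 ≤ profileOf V i1 := by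
      have hge := profileOf_mono hsub i1
      omega
    have key : ∀ m, profileOf V m = profileOf U m := by
      intro m
      have hge := profileOf_mono hsub m
      by_cases h0 : m = i0
      · rw [h0, hprof, if_pos rfl, h30]
      · by_cases h1 : m = i1
        · rw [h1, hprof, if_neg (Ne.symm h01), if_pos rfl]
          have hlt : profileOf V i1 ≤ 2 := by
            by_contra hc
            exact hd.1 ⟨i0, i1, h01, by omega, by omega⟩
          omega
        · rw [hprof, if_neg h0, if_neg h1] at hge ⊢
          have hlt : profileOf V m ≤ 1 := by
            by_contra hc
            exact hd.2.1 ⟨i0, i1, m, h01, fun h => h0 h.symm, fun h => h1 h.symm,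
              by omega, by omega, by omega⟩
          omega
    have hcard : V.card ≤ U.card := by
      rw [card_eq_sum_profile, card_eq_sum_profile]
      exact le_of_eq (Finset.sum_congr rfl (fun m _ => key m))
    exact (Finset.eq_of_subset_of_card_le hsub hcard).symm
end

section
/- Let V ⊆ ℂᴺ be a closed subvariety and U ⊆ {1,…,N}. Then π̄_U(V̄) ≠ (ℙ¹)ᵁ if and only if there exists a nonzero polynomial f in the vanishing ideal I(V) whose support involves only variables indexed by U; equivalently, π̄_U(V̄) = (ℙ¹)ᵁ if and only if I(V) ∩ ℂ[x_i : i ∈ U] = 0. -/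
/-!
If `f ∈ I(V)` is nonzero and involves only the variables indexed by `U`, its multihomogenization
`F` vanishes on `V̄` and involves only the factors indexed by `U`, so a point of `(ℙ¹)ᵁ` at which
`F` does not vanish is missed by `π̄_U`.

Conversely, projecting a closed set along one factor `ℙ¹` gives a closed set (elimination
theory): `p` lies in the image iff the binary forms obtained from the equations by fixing all
other coordinates have a common zero on `ℙ¹`, iff their shifts fail to span the binary forms of
every degree `M` (Nullstellensatz for binary forms), iff all maximal minors of the coefficient
matrices of these shifts vanish at `p`. Eliminating the factors outside `U` one at a time, the
set of points of `(ℙ¹)ᴺ` agreeing on `U` with a point of `V̄` is cut out by multihomogeneous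
equations in the coordinates indexed by `U`. Their dehomogenizations lie in `I(V) ∩ ℂ[x_i : i ∈ U]`,
so when this intersection is `0` the equations vanish and `π̄_U` is onto.
-/

open MvPolynomial

noncomputable section

/-- The complex projective line `ℙ¹`. -/
abbrev P1 := Projectivization ℂ (ℂ × ℂ)

/-- The standard affine chart `ℂ ↪ ℙ¹`, `x ↦ [x : 1]`. -/
def embedC (x : ℂ) : P1 :=
  Projectivization.mk ℂ (x, 1) (by simp)

/-- The embedding `ℂᴺ ↪ (ℙ¹)ᴺ`, homogenizing each coordinate. -/
def embedAff {ι : Type*} (v : ι → ℂ) : ι → P1 := fun i => embedC (v i)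

/-- `f` (in the doubled variables, `Sum.inl i` paired with `Sum.inr i`) is
multihomogeneous of multidegree `d`. -/
def MultiHomog {ι : Type*} (f : MvPolynomial (ι ⊕ ι) ℂ) (d : ι → ℕ) : Prop :=
  ∀ m ∈ f.support, ∀ i : ι, m (Sum.inl i) + m (Sum.inr i) = d i

/-- Evaluation of a polynomial in doubled variables at a point of `(ℙ¹)^ι`,
using chosen homogeneous coordinates. -/
def pEval {ι : Type*} (f : MvPolynomial (ι ⊕ ι) ℂ) (p : ι → P1) : ℂ :=
  eval (Sum.elim (fun i => (p i).rep.1) (fun i => (p i).rep.2)) f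

/-- Zariski-closed subsets of `(ℙ¹)^ι`: common zero sets of collections of
multihomogeneous polynomials. -/
def MClosed {ι : Type*} (C : Set (ι → P1)) : Prop :=
  ∃ F : Set (MvPolynomial (ι ⊕ ι) ℂ),
    (∀ f ∈ F, ∃ d : ι → ℕ, MultiHomog f d) ∧
    C = {p | ∀ f ∈ F, pEval f p = 0}

/-- The multiprojective (Zariski) closure of a subset of `(ℙ¹)^ι`. -/
def mClosure {ι : Type*} (A : Set (ι → P1)) : Set (ι → P1) :=
  ⋂₀ {C | MClosed C ∧ A ⊆ C}

/-- Zariski-closed subsets of affine space `ℂ^ι`: zero sets of collections of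
polynomials.  `IsAffineVariety V` says `V` is such a zero set. -/
def IsAffineVariety {ι : Type*} (V : Set (ι → ℂ)) : Prop :=
  ∃ F : Set (MvPolynomial ι ℂ), V = {x | ∀ f ∈ F, eval x f = 0}

/-- `V` is irreducible (in the Zariski topology on `ℂ^ι`). -/
def IsIrredVariety {ι : Type*} (V : Set (ι → ℂ)) : Prop :=
  V.Nonempty ∧ ∀ C₁ C₂ : Set (ι → ℂ), IsAffineVariety C₁ → IsAffineVariety C₂ →
    V ⊆ C₁ ∪ C₂ → V ⊆ C₁ ∨ V ⊆ C₂

/-- The coordinate projection `(ℙ¹)^ι → (ℙ¹)^U`. -/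
def projP {ι : Type*} (U : Set ι) (p : ι → P1) : U → P1 := fun u => p u

/-- The coordinate projection `π_U : V → ℂ^U` is dominant: its image is Zariski
dense, i.e. no nonzero polynomial in the variables indexed by `U` vanishes on it. -/
def DominantProj {ι : Type*} (V : Set (ι → ℂ)) (U : Set ι) : Prop :=
  ∀ f : MvPolynomial U ℂ, (∀ v ∈ V, eval (fun u : U => v u) f = 0) → f = 0

namespace MvPolynomial

theorem eval_eq_eval_of_forall_mem_vars {σ R : Type*} [CommSemiring R] {p : MvPolynomial σ R}
    {x y : σ → R} (h : ∀ i ∈ p.vars, x i = y i) : eval x p = eval y p :=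
  hom_congr_vars (by ext; simp) (fun i hi _ => by simpa using h i hi) rfl

theorem isWeightedHomogeneous_det {σ R M n : Type*} [CommRing R] [AddCommMonoid M]
    [Fintype n] [DecidableEq n] {w : σ → M} (A : Matrix n n (MvPolynomial σ R)) (e : n → M)
    (hA : ∀ r k, (A r k).IsWeightedHomogeneous w (e r)) :
    A.det.IsWeightedHomogeneous w (∑ r, e r) := by
  rw [Matrix.det_apply']
  refine IsWeightedHomogeneous.sum _ _ _ fun τ _ => ?_
  have hsign : ((Equiv.Perm.sign τ : ℤ) : MvPolynomial σ R).IsWeightedHomogeneous w 0 := by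
    rw [← map_intCast (C : R →+* MvPolynomial σ R)]
    exact isWeightedHomogeneous_C w _
  simpa [Equiv.sum_comp τ e] using hsign.mul
    (IsWeightedHomogeneous.prod Finset.univ (fun k => A (τ k) k) (e ∘ τ) fun k _ => hA _ _)

end MvPolynomial

theorem Subalgebra.det_mem {R A n : Type*} [CommRing R] [CommRing A] [Algebra R A]
    [Fintype n] [DecidableEq n] (S : Subalgebra R A) (M : Matrix n n A)
    (hM : ∀ r k, M r k ∈ S) : M.det ∈ S := by
  let N : Matrix n n S := Matrix.of fun r k => ⟨M r k, hM r k⟩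
  have hN : (S.val : S →+* A).mapMatrix N = M := by ext; rfl
  rw [← hN, ← RingHom.map_det]
  exact N.det.2

theorem Matrix.exists_det_ne_zero_of_span_eq_top {K : Type*} [Field K] {n : ℕ}
    {S : Set (Fin n → K)} (hS : Submodule.span K S = ⊤) :
    ∃ v : Fin n → Fin n → K, (∀ r, v r ∈ S) ∧ (Matrix.of v).det ≠ 0 := by
  obtain ⟨s, hsS, hspan, hli⟩ := exists_linearIndependent K S
  rw [hS] at hspan
  let b := Module.Basis.mk hli (by rw [Subtype.range_coe, hspan])
  have : Fintype s := FiniteDimensional.fintypeBasisIndex b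
  let e : Fin n ≃ s :=
    (Fintype.equivFinOfCardEq (by simpa using (Module.finrank_eq_card_basis b).symm)).symm
  refine ⟨fun r => e r, fun r => hsS (e r).2, ?_⟩
  have hb := ((Pi.basisFun K (Fin n)).is_basis_iff_det (v := fun r => (e r : Fin n → K))).1
    ⟨hli.comp e e.injective, by
      rw [show (fun r => (e r : Fin n → K)) = Subtype.val ∘ e from rfl, EquivLike.range_comp,
        Subtype.range_coe, hspan]⟩
  have hT : (Pi.basisFun K (Fin n)).toMatrix (fun r => (e r : Fin n → K)) =
      (Matrix.of fun r => (e r : Fin n → K)).transpose := by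
    ext; simp [Module.Basis.toMatrix_apply]
  rw [Module.Basis.det_apply, hT, Matrix.det_transpose] at hb
  exact hb.ne_zero

namespace Polynomial

theorem eval_homogenize_eq_sum {R : Type*} [CommSemiring R] (p : R[X]) (n : ℕ) (x : Fin 2 → R) :
    MvPolynomial.eval x (p.homogenize n) =
      ∑ k ∈ Finset.range (n + 1), p.coeff k * x 0 ^ k * x 1 ^ (n - k) := by
  simp only [homogenize, Finset.Nat.sum_antidiagonal_eq_sum_range_succ_mk, map_sum,
    MvPolynomial.eval_monomial]
  refine Finset.sum_congr rfl fun k _ => ?_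
  rw [Finsupp.prod_fintype _ _ (by simp), Fin.prod_univ_two]
  simp [mul_assoc]

theorem eval_homogenize_smul {R : Type*} [CommSemiring R] (p : R[X]) (n : ℕ) (c : R)
    (x : Fin 2 → R) :
    MvPolynomial.eval (c • x) (p.homogenize n) = c ^ n * MvPolynomial.eval x (p.homogenize n) := by
  simp only [eval_homogenize_eq_sum, Finset.mul_sum, Pi.smul_apply, smul_eq_mul]
  refine Finset.sum_congr rfl fun k hk => ?_
  rw [← Nat.add_sub_of_le (Nat.lt_succ_iff.1 (Finset.mem_range.1 hk))]
  simp only [Nat.add_sub_cancel_left, mul_pow, pow_add]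
  ring

theorem eval_homogenize_one_zero {R : Type*} [CommSemiring R] (p : R[X]) (n : ℕ) :
    MvPolynomial.eval ![1, 0] (p.homogenize n) = p.coeff n := by
  rw [eval_homogenize_eq_sum, Finset.sum_eq_single_of_mem n (Finset.self_mem_range_succ n)]
  · simp
  · intro k hk hkn
    have : n - k ≠ 0 := by have := Finset.mem_range.1 hk; omega
    simp [zero_pow this]

theorem span_eq_top_of_forall_exists_eval_ne_zero {k : Type*} [Field k] [IsAlgClosed k]
    {S : Set k[X]} (hS : ∀ a, ∃ p ∈ S, p.eval a ≠ 0) : Ideal.span S = ⊤ := by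
  obtain ⟨g, hg⟩ := (IsPrincipalIdealRing.principal (Ideal.span S)).principal
  rw [Ideal.submodule_span_eq] at hg
  rw [hg, Ideal.span_singleton_eq_top]
  by_contra hg1
  obtain ⟨a, ha⟩ := IsAlgClosed.exists_root g fun h => hg1 (isUnit_iff_degree_eq_zero.2 h)
  obtain ⟨p, hp, hpa⟩ := hS a
  have hgp : g ∣ p := Ideal.mem_span_singleton.1 (hg ▸ Ideal.subset_span hp)
  exact hpa (eval_eq_zero_of_dvd_of_eval_eq_zero hgp ha)

theorem exists_det_coeff_ne_zero {K : Type*} [Field K] {T : Set K[X]} {M : ℕ}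
    (hT : ∀ E : K[X], E.natDegree ≤ M → E ∈ Submodule.span K T) :
    ∃ g : Fin (M + 1) → K[X], (∀ r, g r ∈ T) ∧
      (Matrix.of fun r c : Fin (M + 1) => (g r).coeff c).det ≠ 0 := by
  let coeffs : K[X] →ₗ[K] Fin (M + 1) → K := LinearMap.pi fun c => Polynomial.lcoeff K c
  have hspan : Submodule.span K (coeffs '' T) = ⊤ := by
    refine eq_top_iff.2 fun v _ => ?_
    let E := (degreeLTEquiv K (M + 1)).symm v
    have hE : (E : K[X]) ∈ degreeLE K M := (degreeLT_succ_eq_degreeLE (R := K)) ▸ E.2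
    have hv : coeffs E = v := (degreeLTEquiv K (M + 1)).apply_symm_apply v
    rw [← hv]
    exact Submodule.apply_mem_span_image_of_mem_span coeffs
      (hT E (natDegree_le_iff_degree_le.2 (mem_degreeLE.1 hE)))
  obtain ⟨w, hwT, hw⟩ := Matrix.exists_det_ne_zero_of_span_eq_top hspan
  choose g hgT hg using hwT
  refine ⟨g, hgT, ?_⟩
  convert hw using 3
  ext r c
  simp [← hg, coeffs]

variable {K α : Type*} [Field K]

def boundedShifts (P : α → K[X]) (D : α → ℕ) (S : Set α) (M : ℕ) : Set K[X] :=
  {g | ∃ f ∈ S, ∃ k, k + D f ≤ M ∧ g = P f * X ^ k}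

variable {P : α → K[X]} {D : α → ℕ} {S : Set α}

theorem mul_mem_span_boundedShifts {M : ℕ} {f : α} (hf : f ∈ S) {Q : K[X]}
    (hQ : Q.natDegree + D f ≤ M) : Q * P f ∈ Submodule.span K (boundedShifts P D S M) := by
  rw [Q.as_sum_range_C_mul_X_pow, Finset.sum_mul]
  refine Submodule.sum_mem _ fun k hk => ?_
  rw [show C (Q.coeff k) * X ^ k * P f = Q.coeff k • (P f * X ^ k) by rw [smul_eq_C_mul]; ring]
  have := Finset.mem_range.1 hk
  exact Submodule.smul_mem _ _ (Submodule.subset_span ⟨f, hf, k, by omega, rfl⟩)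

/-- Reduce `E` modulo `P f₀`, whose formal degree is its true degree; the remainder `R` is then
`∑ (R * l f) * P f` by the Bézout identity. -/
theorem mem_span_boundedShifts_of_bezout {f₀ : α} (hf₀ : f₀ ∈ S) (hP₀ : P f₀ ≠ 0)
    (hdeg₀ : (P f₀).natDegree = D f₀) {l : α →₀ K[X]} (hlS : ↑l.support ⊆ S)
    (hl : ∑ f ∈ l.support, l f * P f = 1) {E : K[X]}
    (hE : E.natDegree ≤ D f₀ + l.support.sup fun f => (l f).natDegree + D f) :
    E ∈ Submodule.span K (boundedShifts P D S
      (D f₀ + l.support.sup fun f => (l f).natDegree + D f)) := by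
  set u := P f₀ * C (P f₀).leadingCoeff⁻¹
  have hu : u.Monic := monic_mul_leadingCoeff_inv hP₀
  have hdegu : u.natDegree = D f₀ := by rw [natDegree_mul_leadingCoeff_inv _ hP₀, hdeg₀]
  rw [← modByMonic_add_div E u]
  refine Submodule.add_mem _ ?_ ?_
  · have hR := natDegree_modByMonic_le E hu
    rw [← mul_one (E %ₘ u), ← hl, Finset.mul_sum]
    refine Submodule.sum_mem _ fun f hf => ?_
    rw [← mul_assoc]
    refine mul_mem_span_boundedShifts (hlS hf) ?_
    have := Finset.le_sup (f := fun f => (l f).natDegree + D f) hf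
    have := natDegree_mul_le (p := E %ₘ u) (q := l f)
    omega
  · rw [show u * (E /ₘ u) = (C (P f₀).leadingCoeff⁻¹ * (E /ₘ u)) * P f₀ by ring]
    refine mul_mem_span_boundedShifts hf₀ ?_
    have := natDegree_C_mul_le (P f₀).leadingCoeff⁻¹ (E /ₘ u)
    have := natDegree_divByMonic E hu
    omega

/-- A family of binary forms without common zero on `ℙ¹` generates all forms of large degree. -/
theorem exists_forall_mem_span_boundedShifts [IsAlgClosed K]
    (hdeg : ∀ f ∈ S, (P f).natDegree ≤ D f)
    (hS : ∀ a b : K, (a, b) ≠ 0 →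
      ∃ f ∈ S, MvPolynomial.eval ![a, b] ((P f).homogenize (D f)) ≠ 0) :
    ∃ M, ∀ E : K[X], E.natDegree ≤ M → E ∈ Submodule.span K (boundedShifts P D S M) := by
  obtain ⟨f₀, hf₀, hlc⟩ : ∃ f ∈ S, (P f).coeff (D f) ≠ 0 := by
    obtain ⟨f, hf, h⟩ := hS 1 0 (by simp)
    exact ⟨f, hf, by rwa [eval_homogenize_one_zero] at h⟩
  have hP₀ : P f₀ ≠ 0 := fun h => hlc (by simp [h])
  have hdeg₀ : (P f₀).natDegree = D f₀ :=
    (hdeg f₀ hf₀).antisymm (le_natDegree_of_ne_zero hlc)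
  have hspan : Ideal.span (P '' S) = ⊤ := span_eq_top_of_forall_exists_eval_ne_zero fun a => by
    obtain ⟨f, hf, h⟩ := hS a 1 (by simp)
    refine ⟨P f, ⟨f, hf, rfl⟩, fun ha => h ?_⟩
    rw [eval_homogenize (hdeg f hf) _ (by simp)]
    simp [ha]
  obtain ⟨l, hlS, hl⟩ :=
    (Finsupp.mem_span_image_iff_linearCombination _).1 ((Ideal.eq_top_iff_one _).1 hspan)
  exact ⟨_, fun E hE => mem_span_boundedShifts_of_bezout hf₀ hP₀ hdeg₀
    ((Finsupp.mem_supported _ _).1 hlS)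
    (by simpa [Finsupp.linearCombination_apply, Finsupp.sum] using hl) hE⟩

end Polynomial

section MultiHomog

variable {ι : Type*} [Fintype ι] [DecidableEq ι]

def bidegreeWeight (v : ι ⊕ ι) : ι → ℕ := Pi.single (Sum.elim id id v) 1

theorem weight_bidegreeWeight_apply (m : (ι ⊕ ι) →₀ ℕ) (i : ι) :
    Finsupp.weight bidegreeWeight m i = m (Sum.inl i) + m (Sum.inr i) := by
  rw [Finsupp.weight_apply, Finsupp.sum_fintype _ _ (by simp), Finset.sum_apply,
    Fintype.sum_sum_type]
  simp [bidegreeWeight, Pi.single_apply]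

theorem multiHomog_iff_isWeightedHomogeneous {f : MvPolynomial (ι ⊕ ι) ℂ} {d : ι → ℕ} :
    MultiHomog f d ↔ f.IsWeightedHomogeneous bidegreeWeight d := by
  simp only [MultiHomog, IsWeightedHomogeneous, mem_support_iff, funext_iff,
    weight_bidegreeWeight_apply]

end MultiHomog

section PEval

variable {ι : Type*}

def homCoords (p : ι → P1) : ι ⊕ ι → ℂ :=
  Sum.elim (fun i => (p i).rep.1) fun i => (p i).rep.2

theorem pEval_eq_eval_homCoords (f : MvPolynomial (ι ⊕ ι) ℂ) (p : ι → P1) :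
    pEval f p = eval (homCoords p) f := rfl

/-- Polynomials in the homogeneous coordinates of the factors indexed by `W`. -/
abbrev supportedPairs (W : Set ι) : Subalgebra ℂ (MvPolynomial (ι ⊕ ι) ℂ) :=
  supported ℂ (Sum.elim id id ⁻¹' W)

theorem pEval_eq_of_eqOn {W : Set ι} {f : MvPolynomial (ι ⊕ ι) ℂ} (hf : f ∈ supportedPairs W)
    {p q : ι → P1} (hpq : ∀ i ∈ W, p i = q i) : pEval f p = pEval f q := by
  refine eval_eq_eval_of_forall_mem_vars fun v hv => ?_
  have hvW := mem_supported.1 hf hv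
  cases v <;> simp_all

variable [Fintype ι]

theorem MultiHomog.eval_mul_left {f : MvPolynomial (ι ⊕ ι) ℂ} {d : ι → ℕ} (hf : MultiHomog f d)
    (c : ι → ℂ) (x : ι ⊕ ι → ℂ) :
    eval (fun v => c (Sum.elim id id v) * x v) f = (∏ i, c i ^ d i) * eval x f := by
  rw [eval_eq', eval_eq', Finset.mul_sum]
  refine Finset.sum_congr rfl fun m hm => ?_
  have hc : ∏ v, c (Sum.elim id id v) ^ m v = ∏ i, c i ^ d i := by
    simp only [Fintype.prod_sum_type, Sum.elim_inl, Sum.elim_inr, id_eq, ← Finset.prod_mul_distrib,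
      ← pow_add, hf m hm]
  simp only [mul_pow, Finset.prod_mul_distrib, hc]
  ring

theorem MultiHomog.pEval_mk_eq_zero_iff {f : MvPolynomial (ι ⊕ ι) ℂ} {d : ι → ℕ}
    (hf : MultiHomog f d) (x : ι ⊕ ι → ℂ) (hx : ∀ i, (x (Sum.inl i), x (Sum.inr i)) ≠ 0) :
    pEval f (fun i => Projectivization.mk ℂ _ (hx i)) = 0 ↔ eval x f = 0 := by
  choose c hc using fun i => Projectivization.exists_smul_eq_mk_rep ℂ _ (hx i)
  have hrep : homCoords (fun i => Projectivization.mk ℂ _ (hx i)) =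
      fun v => (c (Sum.elim id id v) : ℂ) * x v := by
    funext v
    cases v <;> simp [homCoords, ← hc, Units.smul_def]
  rw [pEval_eq_eval_homCoords, hrep, hf.eval_mul_left (fun i => (c i : ℂ)), mul_eq_zero,
    or_iff_right (Finset.prod_ne_zero_iff.2 fun i _ => pow_ne_zero _ (c i).ne_zero)]

theorem MultiHomog.pEval_embedAff_eq_zero_iff {f : MvPolynomial (ι ⊕ ι) ℂ} {d : ι → ℕ}
    (hf : MultiHomog f d) (w : ι → ℂ) :
    pEval f (embedAff w) = 0 ↔ eval (Sum.elim w 1) f = 0 :=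
  hf.pEval_mk_eq_zero_iff (Sum.elim w 1) fun i => by simp

theorem exists_inr_ne_zero_and_eval_ne_zero {f : MvPolynomial (ι ⊕ ι) ℂ} (hf : f ≠ 0) :
    ∃ z : ι ⊕ ι → ℂ, (∀ i, z (Sum.inr i) ≠ 0) ∧ eval z f ≠ 0 := by
  have hg : f * ∏ i, X (Sum.inr i) ≠ 0 :=
    mul_ne_zero hf (Finset.prod_ne_zero_iff.2 fun i _ => X_ne_zero _)
  obtain ⟨z, hz⟩ : ∃ z, eval z (f * ∏ i, X (Sum.inr i)) ≠ 0 := by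
    by_contra! h
    exact hg (MvPolynomial.funext fun z => by simp [h z])
  simp only [eval_mul, eval_prod, eval_X, mul_ne_zero_iff, Finset.prod_ne_zero_iff] at hz
  exact ⟨z, fun i => hz.2 i (Finset.mem_univ _), hz.1⟩

theorem MultiHomog.exists_pEval_ne_zero {f : MvPolynomial (ι ⊕ ι) ℂ} {d : ι → ℕ}
    (hf : MultiHomog f d) (hf0 : f ≠ 0) : ∃ p : ι → P1, pEval f p ≠ 0 := by
  obtain ⟨z, hz, hzf⟩ := exists_inr_ne_zero_and_eval_ne_zero hf0
  have hpair : ∀ i, (z (Sum.inl i), z (Sum.inr i)) ≠ 0 := fun i h => hz i (Prod.ext_iff.1 h).2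
  exact ⟨_, (hf.pEval_mk_eq_zero_iff z hpair).not.2 hzf⟩

end PEval

section Homogenize

variable {ι : Type*}

def dehomogenize (f : MvPolynomial (ι ⊕ ι) ℂ) : MvPolynomial ι ℂ :=
  bind₁ (Sum.elim X 1) f

theorem vars_dehomogenize_subset {f : MvPolynomial (ι ⊕ ι) ℂ} {U : Set ι}
    (hf : f ∈ supportedPairs U) : ↑(dehomogenize f).vars ⊆ U := by
  classical
  intro i hi
  obtain ⟨v, hv, hiv⟩ := Finset.mem_biUnion.1 (vars_bind₁ _ f hi)
  have hvU := mem_supported.1 hf hv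
  cases v <;> simp_all [vars_X]

theorem eval_dehomogenize (f : MvPolynomial (ι ⊕ ι) ℂ) (v : ι → ℂ) :
    eval v (dehomogenize f) = eval (Sum.elim v 1) f := by
  simp only [dehomogenize, eval, eval₂Hom_bind₁]
  congr 2
  funext v
  cases v <;> simp

variable [Fintype ι]

def homogExponent (d : ι → ℕ) (m : ι →₀ ℕ) : (ι ⊕ ι) →₀ ℕ :=
  Finsupp.equivFunOnFinite.symm (Sum.elim m (d - m))

@[simp] theorem homogExponent_inl (d : ι → ℕ) (m : ι →₀ ℕ) (i : ι) :
    homogExponent d m (Sum.inl i) = m i := rfl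

@[simp] theorem homogExponent_inr (d : ι → ℕ) (m : ι →₀ ℕ) (i : ι) :
    homogExponent d m (Sum.inr i) = d i - m i := rfl

def multiHomogenize (f : MvPolynomial ι ℂ) : MvPolynomial (ι ⊕ ι) ℂ :=
  ∑ m ∈ f.support, monomial (homogExponent (f.degreeOf ·) m) (f.coeff m)

theorem multiHomog_multiHomogenize [DecidableEq ι] (f : MvPolynomial ι ℂ) :
    MultiHomog (multiHomogenize f) (f.degreeOf ·) := by
  rw [multiHomog_iff_isWeightedHomogeneous]
  refine IsWeightedHomogeneous.sum _ _ _ fun m hm => isWeightedHomogeneous_monomial _ _ _ ?_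
  funext i
  have := monomial_le_degreeOf i hm
  simp only [weight_bidegreeWeight_apply, homogExponent_inl, homogExponent_inr]
  omega

theorem dehomogenize_multiHomogenize (f : MvPolynomial ι ℂ) :
    dehomogenize (multiHomogenize f) = f := by
  refine MvPolynomial.funext fun v => ?_
  rw [eval_dehomogenize, multiHomogenize, map_sum, f.eval_eq']
  refine Finset.sum_congr rfl fun m _ => ?_
  simp [eval_monomial, Finsupp.prod_fintype, Fintype.prod_sum_type]

theorem multiHomogenize_ne_zero {f : MvPolynomial ι ℂ} (hf : f ≠ 0) : multiHomogenize f ≠ 0 :=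
  fun h => hf (by rw [← dehomogenize_multiHomogenize f, h, dehomogenize, map_zero])

theorem multiHomogenize_mem_supportedPairs {f : MvPolynomial ι ℂ} {U : Set ι}
    (hf : ↑f.vars ⊆ U) : multiHomogenize f ∈ supportedPairs U := by
  refine Subalgebra.sum_mem _ fun m hm => mem_supported.2 ?_
  rw [vars_monomial (mem_support_iff.1 hm)]
  rintro (i | i) hi <;> apply hf <;> simp only [Finset.mem_coe, Finsupp.mem_support_iff,
    homogExponent_inl, homogExponent_inr] at hi
  · exact (mem_vars_iff_mem_support i).2 ⟨m, hm, Finsupp.mem_support_iff.2 hi⟩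
  · exact mem_vars_iff_degreeOf_ne_zero.2 fun h => hi (by simp_all)

theorem MultiHomog.dehomogenize_ne_zero {f : MvPolynomial (ι ⊕ ι) ℂ} {d : ι → ℕ}
    (hf : MultiHomog f d) (hf0 : f ≠ 0) : dehomogenize f ≠ 0 := by
  obtain ⟨z, hz, hzf⟩ := exists_inr_ne_zero_and_eval_ne_zero hf0
  have hscale : (fun v => z (Sum.inr (Sum.elim id id v)) *
      Sum.elim (fun i => z (Sum.inl i) / z (Sum.inr i)) 1 v) = z := by
    funext v
    cases v <;> simp [mul_div_cancel₀, hz]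
  intro h
  have := hf.eval_mul_left (fun i => z (Sum.inr i))
    (Sum.elim (fun i => z (Sum.inl i) / z (Sum.inr i)) 1)
  rw [hscale, ← eval_dehomogenize, h, map_zero, mul_zero] at this
  exact hzf this

end Homogenize

section Closure

variable {ι : Type*}

theorem pEval_eq_zero_of_mem_mClosure {A : Set (ι → P1)} {p : ι → P1} (hp : p ∈ mClosure A)
    {f : MvPolynomial (ι ⊕ ι) ℂ} {d : ι → ℕ} (hf : MultiHomog f d)
    (hA : ∀ a ∈ A, pEval f a = 0) : pEval f p = 0 :=
  hp {q | pEval f q = 0} ⟨⟨{f}, by simpa using ⟨d, hf⟩, by simp⟩, hA⟩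

theorem mClosed_mClosure (A : Set (ι → P1)) : MClosed (mClosure A) := by
  refine ⟨{f | (∃ d, MultiHomog f d) ∧ ∀ a ∈ A, pEval f a = 0}, fun f hf => hf.1, ?_⟩
  ext p
  refine ⟨fun hp f ⟨⟨d, hf⟩, hA⟩ => pEval_eq_zero_of_mem_mClosure hp hf hA, ?_⟩
  rintro hp C ⟨⟨F, hF, rfl⟩, hAC⟩ f hfF
  exact hp f ⟨hF f hfF, fun a ha => hAC ha f hfF⟩

def MClosedOn (W : Set ι) (C : Set (ι → P1)) : Prop :=
  ∃ F : Set (MvPolynomial (ι ⊕ ι) ℂ), (∀ f ∈ F, ∃ d, MultiHomog f d) ∧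
    F ⊆ supportedPairs W ∧ C = {p | ∀ f ∈ F, pEval f p = 0}

theorem mClosedOn_univ_mClosure (A : Set (ι → P1)) : MClosedOn Set.univ (mClosure A) := by
  obtain ⟨F, hF, hA⟩ := mClosed_mClosure A
  refine ⟨F, hF, fun f _ => ?_, hA⟩
  rw [supportedPairs, Set.preimage_univ, supported_univ]
  exact Algebra.mem_top

theorem projP_image_mClosure_ne_univ [Fintype ι] [DecidableEq ι] {V : Set (ι → ℂ)} {U : Set ι} {f : MvPolynomial ι ℂ}
    (hf0 : f ≠ 0) (hfV : ∀ v ∈ V, eval v f = 0) (hfU : ↑f.vars ⊆ U) :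
    projP U '' mClosure (embedAff '' V) ≠ Set.univ := by
  intro hsurj
  have hF := multiHomog_multiHomogenize f
  have hFV : ∀ a ∈ embedAff '' V, pEval (multiHomogenize f) a = 0 := by
    rintro _ ⟨v, hv, rfl⟩
    rw [hF.pEval_embedAff_eq_zero_iff, ← eval_dehomogenize, dehomogenize_multiHomogenize]
    exact hfV v hv
  obtain ⟨p, hp⟩ := hF.exists_pEval_ne_zero (multiHomogenize_ne_zero hf0)
  obtain ⟨q, hq, hqp⟩ := hsurj.symm ▸ Set.mem_univ (projP U p)
  refine hp ?_
  rw [← pEval_eq_of_eqOn (multiHomogenize_mem_supportedPairs hfU) fun i hi => congrFun hqp ⟨i, hi⟩]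
  exact pEval_eq_zero_of_mem_mClosure hq hF hFV

end Closure

section Slice

variable {ι : Type*} [DecidableEq ι]

def offPair (j : ι) (m : (ι ⊕ ι) →₀ ℕ) : (ι ⊕ ι) →₀ ℕ := m.filter (Sum.elim id id · ≠ j)

theorem monomial_eq_offPair_mul (j : ι) (m : (ι ⊕ ι) →₀ ℕ) (c : ℂ) :
    monomial m c = monomial (offPair j m) c * X (Sum.inl j) ^ m (Sum.inl j) *
      X (Sum.inr j) ^ m (Sum.inr j) := by
  have hm : offPair j m + Finsupp.single (Sum.inl j) (m (Sum.inl j)) +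
      Finsupp.single (Sum.inr j) (m (Sum.inr j)) = m := by
    ext (i | i) <;> by_cases h : i = j <;> simp [offPair, h]
  rw [← monomial_add_single, ← monomial_add_single, hm]

def dehomogenizeAt (j : ι) : MvPolynomial (ι ⊕ ι) ℂ →ₐ[ℂ] Polynomial (MvPolynomial (ι ⊕ ι) ℂ) :=
  aeval fun v =>
    if v = Sum.inl j then Polynomial.X else if v = Sum.inr j then 1 else Polynomial.C (X v)

theorem dehomogenizeAt_monomial (j : ι) (m : (ι ⊕ ι) →₀ ℕ) (c : ℂ) :
    dehomogenizeAt j (monomial m c) =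
      Polynomial.C (monomial (offPair j m) c) * Polynomial.X ^ m (Sum.inl j) := by
  have hoff : dehomogenizeAt j (monomial (offPair j m) c) =
      Polynomial.C (monomial (offPair j m) c) := by
    rw [dehomogenizeAt, aeval_monomial, monomial_eq, map_mul, Finsupp.prod, Finsupp.prod, map_prod]
    congr 1
    refine Finset.prod_congr rfl fun v hv => ?_
    have : Sum.elim id id v ≠ j := by
      by_contra h; simp [offPair, h] at hv
    obtain (i | i) := v <;> simp_all
  rw [monomial_eq_offPair_mul j, map_mul, map_mul, map_pow, map_pow, hoff]
  simp [dehomogenizeAt]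

theorem coeff_dehomogenizeAt_eq_sum (j : ι) (f : MvPolynomial (ι ⊕ ι) ℂ) (k : ℕ) :
    (dehomogenizeAt j f).coeff k =
      ∑ m ∈ f.support with m (Sum.inl j) = k, monomial (offPair j m) (f.coeff m) := by
  conv_lhs => rw [f.as_sum]
  rw [map_sum, Polynomial.finsetSum_coeff, Finset.sum_filter]
  refine Finset.sum_congr rfl fun m _ => ?_
  rw [dehomogenizeAt_monomial, Polynomial.coeff_C_mul_X_pow]
  simp only [eq_comm]

theorem coeff_dehomogenizeAt_mem_supportedPairs {W : Set ι} {f : MvPolynomial (ι ⊕ ι) ℂ}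
    (hf : f ∈ supportedPairs W) (j : ι) (k : ℕ) :
    (dehomogenizeAt j f).coeff k ∈ supportedPairs (W \ {j}) := by
  rw [coeff_dehomogenizeAt_eq_sum]
  refine Subalgebra.sum_mem _ fun m hm => mem_supported.2 ?_
  have hm := (Finset.mem_filter.1 hm).1
  rw [vars_monomial (mem_support_iff.1 hm)]
  intro v hv
  simp only [offPair, Finset.mem_coe, Finsupp.mem_support_iff, Finsupp.filter_apply, ne_eq,
    ite_eq_right_iff, Classical.not_imp] at hv
  exact ⟨mem_supported.1 hf
    ((mem_vars_iff_mem_support v).2 ⟨m, hm, Finsupp.mem_support_iff.2 hv.2⟩), hv.1⟩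

variable {f : MvPolynomial (ι ⊕ ι) ℂ} {d : ι → ℕ}

theorem MultiHomog.natDegree_dehomogenizeAt_le (hf : MultiHomog f d) (j : ι) :
    (dehomogenizeAt j f).natDegree ≤ d j := by
  conv_lhs => rw [f.as_sum]
  rw [map_sum]
  refine Polynomial.natDegree_sum_le_of_forall_le _ _ fun m hm => ?_
  rw [dehomogenizeAt_monomial]
  exact (Polynomial.natDegree_C_mul_X_pow_le _ _).trans (by have := hf m hm j; omega)

theorem MultiHomog.eval_eq_eval_homogenize (hf : MultiHomog f d) (j : ι) (x : ι ⊕ ι → ℂ) :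
    eval x f = eval ![x (Sum.inl j), x (Sum.inr j)]
      (((dehomogenizeAt j f).map (eval x)).homogenize (d j)) := by
  conv_lhs => rw [f.as_sum]
  conv_rhs => rw [f.as_sum]
  simp only [map_sum, Polynomial.map_sum, Polynomial.homogenize_finsetSum]
  refine Finset.sum_congr rfl fun m hm => ?_
  have := hf m hm j
  rw [dehomogenizeAt_monomial, Polynomial.map_mul, Polynomial.map_C, Polynomial.map_pow,
    Polynomial.map_X, Polynomial.homogenize_C_mul, Polynomial.homogenize_X_pow (by omega),
    monomial_eq_offPair_mul j m, show d j - m (Sum.inl j) = m (Sum.inr j) by omega]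
  simp [mul_assoc]

theorem MultiHomog.coeff_dehomogenizeAt [Fintype ι] (hf : MultiHomog f d) (j : ι) (k : ℕ) :
    MultiHomog ((dehomogenizeAt j f).coeff k) (Function.update d j 0) := by
  rw [coeff_dehomogenizeAt_eq_sum, multiHomog_iff_isWeightedHomogeneous]
  refine IsWeightedHomogeneous.sum _ _ _ fun m hm => isWeightedHomogeneous_monomial _ _ _ ?_
  funext i
  rw [weight_bidegreeWeight_apply]
  by_cases h : i = j <;> simp [offPair, h, hf m (Finset.mem_filter.1 hm).1 i]

end Slice

section Elimination

variable {ι : Type*} [DecidableEq ι]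

/-- The maximal minor, on the rows `ρ`, of the matrix whose row `(f, k)` lists the coefficients of
`x_j ^ k * f` dehomogenized at `j`; these minors eliminate the `j`-th factor. -/
def eliminant (j : ι) (M : ℕ) (ρ : Fin (M + 1) → MvPolynomial (ι ⊕ ι) ℂ × ℕ) :
    MvPolynomial (ι ⊕ ι) ℂ :=
  (Matrix.of fun r c : Fin (M + 1) =>
    (dehomogenizeAt j (ρ r).1 * Polynomial.X ^ (ρ r).2).coeff c).det

theorem eval_eliminant (j : ι) (M : ℕ) (ρ : Fin (M + 1) → MvPolynomial (ι ⊕ ι) ℂ × ℕ)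
    (x : ι ⊕ ι → ℂ) : eval x (eliminant j M ρ) = (Matrix.of fun r c : Fin (M + 1) =>
      ((dehomogenizeAt j (ρ r).1).map (eval x) * Polynomial.X ^ (ρ r).2).coeff c).det := by
  rw [eliminant, RingHom.map_det]
  congr 1
  ext r c
  simp [← Polynomial.coeff_map]

theorem eliminant_mem_supportedPairs (j : ι) (M : ℕ) {W : Set ι}
    {ρ : Fin (M + 1) → MvPolynomial (ι ⊕ ι) ℂ × ℕ} (hρ : ∀ r, (ρ r).1 ∈ supportedPairs W) :
    eliminant j M ρ ∈ supportedPairs (W \ {j}) := by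
  refine Subalgebra.det_mem _ _ fun r c => ?_
  rw [Matrix.of_apply, Polynomial.coeff_mul_X_pow']
  split_ifs
  · exact coeff_dehomogenizeAt_mem_supportedPairs (hρ r) j _
  · exact Subalgebra.zero_mem _

theorem MultiHomog.pEval_update {f : MvPolynomial (ι ⊕ ι) ℂ} {d : ι → ℕ} (hf : MultiHomog f d)
    (p : ι → P1) (j : ι) (z : P1) :
    pEval f (Function.update p j z) = eval ![z.rep.1, z.rep.2]
      (((dehomogenizeAt j f).map (eval (homCoords p))).homogenize (d j)) := by
  have hmap : (dehomogenizeAt j f).map (eval (homCoords (Function.update p j z))) =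
      (dehomogenizeAt j f).map (eval (homCoords p)) := by
    ext k
    rw [Polynomial.coeff_map, Polynomial.coeff_map]
    refine eval_eq_eval_of_forall_mem_vars fun v hv => ?_
    have hfu : f ∈ supportedPairs Set.univ := by
      rw [supportedPairs, Set.preimage_univ, supported_univ]; exact Algebra.mem_top
    have hvj : Sum.elim id id v ≠ j := by
      simpa using mem_supported.1 (coeff_dehomogenizeAt_mem_supportedPairs hfu j k) hv
    obtain (i | i) := v <;> simp [homCoords, Function.update_of_ne (show i ≠ j from hvj)]
  rw [pEval_eq_eval_homCoords, hf.eval_eq_eval_homogenize j, hmap]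
  simp [homCoords]

variable {F : Set (MvPolynomial (ι ⊕ ι) ℂ)}
  {d : MvPolynomial (ι ⊕ ι) ℂ → ι → ℕ} {p : ι → P1} {j : ι}

/-- The kernel vector `(a ^ c * b ^ (M - c))_c`, for `z = [a : b]`, kills every row. -/
theorem pEval_eliminant_eq_zero (hd : ∀ f ∈ F, MultiHomog f (d f)) {z : P1}
    (hz : ∀ f ∈ F, pEval f (Function.update p j z) = 0) {M : ℕ}
    {ρ : Fin (M + 1) → MvPolynomial (ι ⊕ ι) ℂ × ℕ}
    (hρ : ∀ r, (ρ r).1 ∈ F ∧ (ρ r).2 + d (ρ r).1 j ≤ M) :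
    pEval (eliminant j M ρ) p = 0 := by
  rw [pEval_eq_eval_homCoords, eval_eliminant, ← Matrix.exists_mulVec_eq_zero_iff]
  refine ⟨fun c => z.rep.1 ^ (c : ℕ) * z.rep.2 ^ (M - c), fun h => z.rep_nonzero ?_, ?_⟩
  · by_cases ha : z.rep.1 = 0
    · have := congrFun h 0
      simp only [Fin.val_zero, pow_zero, one_mul, Nat.sub_zero, Pi.zero_apply] at this
      exact Prod.ext ha (pow_eq_zero_iff'.1 this).1
    · have := congrFun h (Fin.last M)
      simp only [Fin.val_last, Nat.sub_self, pow_zero, mul_one, Pi.zero_apply] at this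
      exact absurd (pow_eq_zero_iff'.1 this).1 ha
  funext r
  simp only [Matrix.mulVec, dotProduct, Matrix.of_apply, Pi.zero_apply]
  obtain ⟨hrF, hrM⟩ := hρ r
  set P := (dehomogenizeAt j (ρ r).1).map (eval (homCoords p))
  have hP : P.natDegree ≤ d (ρ r).1 j :=
    Polynomial.natDegree_map_le.trans ((hd _ hrF).natDegree_dehomogenizeAt_le j)
  have hM : M = d (ρ r).1 j + (M - d (ρ r).1 j) := by omega
  calc ∑ c : Fin (M + 1),
        (P * Polynomial.X ^ (ρ r).2).coeff c * (z.rep.1 ^ (c : ℕ) * z.rep.2 ^ (M - c))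
      = eval ![z.rep.1, z.rep.2] ((P * Polynomial.X ^ (ρ r).2).homogenize M) := by
        rw [Polynomial.eval_homogenize_eq_sum, ← Fin.sum_univ_eq_sum_range]
        simp [mul_assoc]
    _ = pEval (ρ r).1 (Function.update p j z) *
          eval ![z.rep.1, z.rep.2] ((Polynomial.X ^ (ρ r).2).homogenize (M - d (ρ r).1 j)) := by
        rw [(hd _ hrF).pEval_update, hM, Polynomial.homogenize_mul _ _ hP
          ((Polynomial.natDegree_X_pow_le _).trans (by omega)), map_mul, ← hM]
    _ = 0 := by rw [hz _ hrF, zero_mul]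

/-- If no `z` puts `p` into the zero set of `F`, the shifted rows span all binary forms of some
degree `M`, so some maximal minor is nonzero at `p`. -/
theorem exists_pEval_eliminant_ne_zero (hd : ∀ f ∈ F, MultiHomog f (d f))
    (hp : ∀ z : P1, ∃ f ∈ F, pEval f (Function.update p j z) ≠ 0) :
    ∃ (M : ℕ) (ρ : Fin (M + 1) → MvPolynomial (ι ⊕ ι) ℂ × ℕ),
      (∀ r, (ρ r).1 ∈ F ∧ (ρ r).2 + d (ρ r).1 j ≤ M) ∧ pEval (eliminant j M ρ) p ≠ 0 := by
  set P := fun f => (dehomogenizeAt j f).map (eval (homCoords p))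
  have hS : ∀ a b : ℂ, (a, b) ≠ 0 →
      ∃ f ∈ F, eval ![a, b] ((P f).homogenize (d f j)) ≠ 0 := by
    intro a b hab
    obtain ⟨f, hf, hne⟩ := hp (Projectivization.mk ℂ (a, b) hab)
    obtain ⟨c, hc⟩ := Projectivization.exists_smul_eq_mk_rep ℂ (a, b) hab
    have hrep : ![(c • (a, b)).1, (c • (a, b)).2] = (c : ℂ) • ![a, b] := by
      ext i; fin_cases i <;> simp [Units.smul_def]
    refine ⟨f, hf, fun h => hne ?_⟩
    rw [(hd f hf).pEval_update, ← hc, hrep, Polynomial.eval_homogenize_smul, h, mul_zero]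
  obtain ⟨M, hM⟩ := Polynomial.exists_forall_mem_span_boundedShifts
    (fun f hf => Polynomial.natDegree_map_le.trans ((hd f hf).natDegree_dehomogenizeAt_le j)) hS
  obtain ⟨g, hgT, hg⟩ := Polynomial.exists_det_coeff_ne_zero hM
  choose ρ hρF k hk hgρ using hgT
  refine ⟨M, fun r => (ρ r, k r), fun r => ⟨hρF r, hk r⟩, ?_⟩
  have hA : (Matrix.of fun r c : Fin (M + 1) =>
      ((dehomogenizeAt j (ρ r)).map (eval (homCoords p)) * Polynomial.X ^ k r).coeff c) =
      Matrix.of fun r c : Fin (M + 1) => (g r).coeff c := by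
    ext r c
    simp [hgρ]
  rwa [pEval_eq_eval_homCoords, eval_eliminant, hA]

variable [Fintype ι]

theorem multiHomog_eliminant (j : ι) (M : ℕ) {ρ : Fin (M + 1) → MvPolynomial (ι ⊕ ι) ℂ × ℕ}
    {e : Fin (M + 1) → ι → ℕ} (hρ : ∀ r, MultiHomog (ρ r).1 (e r)) :
    MultiHomog (eliminant j M ρ) (∑ r, Function.update (e r) j 0) := by
  rw [multiHomog_iff_isWeightedHomogeneous]
  refine isWeightedHomogeneous_det _ _ fun r c => ?_
  rw [Matrix.of_apply, Polynomial.coeff_mul_X_pow', ← multiHomog_iff_isWeightedHomogeneous]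
  split_ifs
  · exact (hρ r).coeff_dehomogenizeAt j _
  · exact (multiHomog_iff_isWeightedHomogeneous).2 (isWeightedHomogeneous_zero _ _ _)

theorem MClosedOn.image_update {W : Set ι} {C : Set (ι → P1)} (hC : MClosedOn W C) (j : ι) :
    MClosedOn (W \ {j}) {p | ∃ z, Function.update p j z ∈ C} := by
  obtain ⟨F, hFd, hFW, rfl⟩ := hC
  choose! d hd using hFd
  refine ⟨{g | ∃ M ρ, (∀ r, (ρ r).1 ∈ F ∧ (ρ r).2 + d (ρ r).1 j ≤ M) ∧ g = eliminant j M ρ},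
    ?_, ?_, ?_⟩
  · rintro _ ⟨M, ρ, hρ, rfl⟩
    exact ⟨_, multiHomog_eliminant j M fun r => hd _ (hρ r).1⟩
  · rintro _ ⟨M, ρ, hρ, rfl⟩
    exact eliminant_mem_supportedPairs j M fun r => hFW (hρ r).1
  ext p
  refine ⟨fun ⟨z, hz⟩ => ?_, fun hp => ?_⟩
  · rintro _ ⟨M, ρ, hρ, rfl⟩
    exact pEval_eliminant_eq_zero hd hz hρ
  · simp only [Set.mem_ofPred_eq]
    by_contra! hno
    obtain ⟨M, ρ, hρ, hne⟩ := exists_pEval_eliminant_ne_zero hd hno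
    exact hne (hp _ ⟨M, ρ, hρ, rfl⟩)

theorem MClosedOn.eliminate {W : Set ι} {C : Set (ι → P1)} (hC : MClosedOn W C) (T : Finset ι) :
    MClosedOn (W \ T) {p | ∃ q ∈ C, ∀ i ∉ T, q i = p i} := by
  induction T using Finset.induction_on with
  | empty => simpa [← funext_iff] using hC
  | insert j T hj ih =>
    convert ih.image_update j using 1
    · ext i
      simp only [Finset.coe_insert, Set.mem_sdiff, Set.mem_insert_iff, Set.mem_singleton_iff]
      tauto
    ext p
    constructor
    · rintro ⟨q, hq, hqp⟩
      refine ⟨q j, q, hq, fun i hi => ?_⟩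
      by_cases hij : i = j
      · simp [hij]
      · simpa [hij] using hqp i (by simp [hij, hi])
    · rintro ⟨z, q, hq, hqp⟩
      refine ⟨q, hq, fun i hi => ?_⟩
      have hij : i ≠ j := fun h => hi (by simp [h])
      simpa [hij] using hqp i (by simp_all)

theorem projP_image_mClosure_eq_univ {V : Set (ι → ℂ)} {U : Set ι}
    (hV : ∀ f : MvPolynomial ι ℂ, (∀ v ∈ V, eval v f = 0) → ↑f.vars ⊆ U → f = 0) :
    projP U '' mClosure (embedAff '' V) = Set.univ := by
  classical
  obtain ⟨F, hFd, hFU, hF⟩ := (mClosedOn_univ_mClosure (embedAff '' V)).eliminate Uᶜ.toFinset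
  rw [show Set.univ \ ↑Uᶜ.toFinset = U by simp] at hFU
  have hsat := fun p => Set.ext_iff.1 hF p
  simp only [Set.mem_ofPred_eq, Set.mem_toFinset, Set.mem_compl_iff, not_not] at hsat
  have hF0 : ∀ f ∈ F, f = 0 := by
    intro f hf
    obtain ⟨d, hd⟩ := hFd f hf
    by_contra hf0
    refine hd.dehomogenize_ne_zero hf0 (hV _ (fun v hv => ?_) (vars_dehomogenize_subset (hFU hf)))
    rw [eval_dehomogenize, ← hd.pEval_embedAff_eq_zero_iff]
    exact (hsat _).1 ⟨_, fun C hC => hC.2 ⟨v, hv, rfl⟩, fun _ _ => rfl⟩ f hf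
  refine Set.eq_univ_of_forall fun q => ?_
  obtain ⟨p, hp, hpq⟩ := (hsat fun i => if h : i ∈ U then q ⟨i, h⟩ else embedC 0).2
    fun f hf => by simp [hF0 f hf, pEval]
  exact ⟨p, hp, funext fun u => by simpa [projP, u.2] using hpq u u.2⟩

end Elimination

theorem proj_surjective_iff_no_poly_general {N : ℕ} (V : Set (Fin N → ℂ)) (U : Set (Fin N)) :
    projP U '' mClosure (embedAff '' V) ≠ Set.univ ↔
      ∃ f : MvPolynomial (Fin N) ℂ, f ≠ 0 ∧ (∀ v ∈ V, eval v f = 0) ∧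
        ↑f.vars ⊆ U := by
  refine ⟨fun h => ?_, fun ⟨f, hf0, hfV, hfU⟩ => projP_image_mClosure_ne_univ hf0 hfV hfU⟩
  by_contra! hno
  exact h (projP_image_mClosure_eq_univ fun f hfV hfU => by_contra fun hf0 => hno f hf0 hfV hfU)

/-- For a closed subvariety `V ⊆ ℂᴺ` and `U ⊆ {1,…,N}`: the projection of the
multiprojective closure `V̄` satisfies `π̄_U(V̄) ≠ (ℙ¹)ᵁ` iff there is a nonzero
polynomial in the vanishing ideal of `V` involving only variables indexed by
`U`; equivalently, `π̄_U(V̄) = (ℙ¹)ᵁ` iff `I(V) ∩ ℂ[x_i : i ∈ U] = 0`. -/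
theorem proj_surjective_iff_no_poly {N : ℕ} (V : Set (Fin N → ℂ))
    (hV : IsAffineVariety V) (U : Set (Fin N)) :
    projP U '' mClosure (embedAff '' V) ≠ Set.univ ↔
      ∃ f : MvPolynomial (Fin N) ℂ, f ≠ 0 ∧ (∀ v ∈ V, eval v f = 0) ∧
        ↑f.vars ⊆ U :=
  proj_surjective_iff_no_poly_general V U

end
end
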